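/- arXiv:2208.14079 — 14 statements merged into one kernel-verified Lean document; each statement's English description precedes it below -/
import Mathlib

section
/- Let X be a topological space such that every open relation Φ ⊆ X × ℝ whose fibers Φ(x) = {y : (x,y) ∈ Φ} are nonempty and convex admits a continuous selection f : X → ℝ (i.e., (x, f x) ∈ Φ for all x). Then X is a normal space. -/
/-!
Given disjoint closed sets `A` and `B`, the relation whose fibre is `(-∞, 0)` over `A`, `(1, ∞)`
over `B` and `ℝ` elsewhere is open, with nonempty convex fibres. A continuous selection `f` of it
separates `A` from `B` by the open sets `f⁻¹' (-∞, 0)` and `f⁻¹' (1, ∞)`.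
-/

open Set

section SeparatingRelation

variable {X : Type*}

def separatingRelation (A B : Set X) : Set (X × ℝ) :=
  {p | (p.1 ∈ A → p.2 < 0) ∧ (p.1 ∈ B → 1 < p.2)}

lemma separatingRelation_eq (A B : Set X) :
    separatingRelation A B = (Aᶜ ×ˢ univ ∪ univ ×ˢ Iio 0) ∩ (Bᶜ ×ˢ univ ∪ univ ×ˢ Ioi 1) := by
  ext ⟨x, y⟩
  simp [separatingRelation, imp_iff_not_or]

lemma isOpen_separatingRelation [TopologicalSpace X] {A B : Set X} (hA : IsClosed A)
    (hB : IsClosed B) : IsOpen (separatingRelation A B) := by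
  rw [separatingRelation_eq]
  exact ((hA.isOpen_compl.prod isOpen_univ).union (isOpen_univ.prod isOpen_Iio)).inter
    ((hB.isOpen_compl.prod isOpen_univ).union (isOpen_univ.prod isOpen_Ioi))

lemma nonempty_separatingRelation_fiber {A B : Set X} (hAB : Disjoint A B) (x : X) :
    {y : ℝ | (x, y) ∈ separatingRelation A B}.Nonempty := by
  by_cases hxA : x ∈ A
  · exact ⟨-1, fun _ ↦ by norm_num, fun hxB ↦ absurd hxB (hAB.notMem_of_mem_left hxA)⟩
  · exact ⟨2, fun h ↦ absurd h hxA, fun _ ↦ by norm_num⟩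

lemma Convex.setOf_imp_mem {E : Type*} [AddCommMonoid E] [Module ℝ E] {S : Set E}
    (hS : Convex ℝ S) (P : Prop) : Convex ℝ {y | P → y ∈ S} := by
  by_cases hP : P <;> simp [hP, hS, convex_univ]

lemma convex_separatingRelation_fiber (A B : Set X) (x : X) :
    Convex ℝ {y : ℝ | (x, y) ∈ separatingRelation A B} :=
  ((convex_Iio 0).setOf_imp_mem (x ∈ A)).inter ((convex_Ioi 1).setOf_imp_mem (x ∈ B))

end SeparatingRelation

lemma separatedNhds_Iio_Ioi {α : Type*} [TopologicalSpace α] [LinearOrder α]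
    [OrderClosedTopology α] {a b : α} (hab : a ≤ b) : SeparatedNhds (Iio a) (Ioi b) :=
  ⟨_, _, isOpen_Iio, isOpen_Ioi, subset_rfl, subset_rfl,
    (Iic_disjoint_Ioi hab).mono_left Iio_subset_Iic_self⟩

theorem stmt_0_general {X : Type*} [TopologicalSpace X]
    (h : ∀ Φ : Set (X × ℝ), IsOpen Φ →
      (∀ x : X, {y : ℝ | (x, y) ∈ Φ}.Nonempty ∧ Convex ℝ {y : ℝ | (x, y) ∈ Φ}) →
      ∃ f : X → ℝ, Continuous f ∧ ∀ x : X, (x, f x) ∈ Φ) :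
    NormalSpace X := by
  refine ⟨fun A B hA hB hAB ↦ ?_⟩
  obtain ⟨f, hf, hsel⟩ := h (separatingRelation A B) (isOpen_separatingRelation hA hB)
    fun x ↦ ⟨nonempty_separatingRelation_fiber hAB x, convex_separatingRelation_fiber A B x⟩
  exact ((separatedNhds_Iio_Ioi zero_le_one).preimage hf).mono
    (fun x hx ↦ (hsel x).1 hx) (fun x hx ↦ (hsel x).2 hx)

/-- If every open relation `Φ ⊆ X × ℝ` with nonempty convex fibers admits a
continuous selection, then `X` is normal. -/
theorem stmt_0 {X : Type*} [TopologicalSpace X] [T2Space X]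
    (h : ∀ Φ : Set (X × ℝ), IsOpen Φ →
      (∀ x : X, {y : ℝ | (x, y) ∈ Φ}.Nonempty ∧ Convex ℝ {y : ℝ | (x, y) ∈ Φ}) →
      ∃ f : X → ℝ, Continuous f ∧ ∀ x : X, (x, f x) ∈ Φ) :
    NormalSpace X :=
  stmt_0_general h
end

section
/- Let X, Y, Z be topological spaces, Φ ⊆ X × Y a relation that is lower semicontinuous (meaning {x : Φ(x) ∩ U ≠ ∅} is open in X for every open U ⊆ Y), and Ψ ⊆ Y × Z an open subset of Y × Z. Then the composite relation Ψ ∘ Φ = {(x,z) : ∃ y, (x,y) ∈ Φ ∧ (y,z) ∈ Ψ} is an open subset of X × Z. -/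
/-- The composite of an l.s.c. relation with an open relation is open. -/
theorem stmt_1 {X Y Z : Type*} [TopologicalSpace X] [TopologicalSpace Y] [TopologicalSpace Z]
    (Φ : Set (X × Y)) (Ψ : Set (Y × Z))
    (hΦ : ∀ U : Set Y, IsOpen U → IsOpen {x : X | ∃ y ∈ U, (x, y) ∈ Φ})
    (hΨ : IsOpen Ψ) :
    IsOpen {p : X × Z | ∃ y : Y, (p.1, y) ∈ Φ ∧ (y, p.2) ∈ Ψ} := by
  refine isOpen_iff_forall_mem_open.2 ?_
  rintro ⟨x, z⟩ ⟨y, hxy, hyz⟩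
  obtain ⟨U, W, hU, hW, hyU, hzW, hUW⟩ := isOpen_prod_iff.1 hΨ y z hyz
  refine ⟨{x | ∃ y ∈ U, (x, y) ∈ Φ} ×ˢ W, ?_, (hΦ U hU).prod hW, ⟨y, hyU, hxy⟩, hzW⟩
  rintro ⟨x', z'⟩ ⟨⟨y', hy'U, hxy'⟩, hz'W⟩
  exact ⟨y', hxy', hUW ⟨hy'U, hz'W⟩⟩
end

section
/- Let X be a topological space, (Y,ρ) a metric space, and Φ : X → set Y a set-valued map with nonempty values. Suppose that for every n ∈ ℕ with n ≥ 1 there exists an open relation Ω_n ⊆ X × Y such that Φ ⊆ Ω_n (as subsets of X × Y, identifying Φ with its graph) and Ω_n(x) is contained in the open (1/n)-neighborhood of Φ(x) for every x ∈ X. Then Φ is lower semicontinuous. -/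
/-! If `y ∈ Φ x₀ ∩ U` and the ball `B(y, ε)` lies in `U`, then the slice `{x | (x, y) ∈ Ω}` of
an open relation `Ω ⊇ Φ` that stays within `ε` of `Φ` is a neighbourhood of `x₀` on which
`Φ x` meets `B(y, ε) ⊆ U`. -/

theorem isOpen_setOf_inter_nonempty_of_forall_pos {X Y : Type*} [TopologicalSpace X]
    [PseudoMetricSpace Y] (Φ : X → Set Y)
    (h : ∀ ε > 0, ∃ Ω : Set (X × Y), IsOpen Ω ∧ (∀ x, ∀ y ∈ Φ x, (x, y) ∈ Ω) ∧
      ∀ x y, (x, y) ∈ Ω → ∃ z ∈ Φ x, dist y z < ε)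
    {U : Set Y} (hU : IsOpen U) : IsOpen {x | (Φ x ∩ U).Nonempty} := by
  rw [isOpen_iff_mem_nhds]
  rintro x₀ ⟨y, hyΦ, hyU⟩
  obtain ⟨ε, hε, hball⟩ := Metric.isOpen_iff.1 hU y hyU
  obtain ⟨Ω, hΩ, hsub, hnear⟩ := h ε hε
  have hslice : IsOpen {x | (x, y) ∈ Ω} := hΩ.preimage (Continuous.prodMk_left y)
  filter_upwards [hslice.mem_nhds (hsub x₀ y hyΦ)] with x hx
  obtain ⟨z, hzΦ, hz⟩ := hnear x y hx
  exact ⟨z, hzΦ, hball (Metric.mem_ball'.2 hz)⟩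

theorem stmt_4_general {X Y : Type*} [TopologicalSpace X] [MetricSpace Y]
    (Φ : X → Set Y)
    (h : ∀ n : ℕ, 1 ≤ n → ∃ Ω : Set (X × Y), IsOpen Ω ∧
      (∀ x : X, ∀ y ∈ Φ x, (x, y) ∈ Ω) ∧
      (∀ x : X, ∀ y : Y, (x, y) ∈ Ω → ∃ z ∈ Φ x, dist y z < 1 / (n : ℝ))) :
    ∀ U : Set Y, IsOpen U → IsOpen {x : X | (Φ x ∩ U).Nonempty} := by
  intro U hU
  refine isOpen_setOf_inter_nonempty_of_forall_pos Φ (fun ε hε => ?_) hU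
  obtain ⟨n, hn⟩ := exists_nat_one_div_lt hε
  obtain ⟨Ω, hΩ, hsub, hnear⟩ := h (n + 1) (Nat.le_add_left 1 n)
  refine ⟨Ω, hΩ, hsub, fun x y hxy => ?_⟩
  obtain ⟨z, hzΦ, hz⟩ := hnear x y hxy
  exact ⟨z, hzΦ, hz.trans (by exact_mod_cast hn)⟩

/-- If a set-valued map `Φ` with nonempty values into a metric space is sandwiched,
for every `n ≥ 1`, between its graph and its open `1/n`-enlargement by an open
relation `Ω n`, then `Φ` is lower semicontinuous. -/
theorem stmt_4 {X Y : Type*} [TopologicalSpace X] [MetricSpace Y]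
    (Φ : X → Set Y) (hne : ∀ x, (Φ x).Nonempty)
    (h : ∀ n : ℕ, 1 ≤ n → ∃ Ω : Set (X × Y), IsOpen Ω ∧
      (∀ x : X, ∀ y ∈ Φ x, (x, y) ∈ Ω) ∧
      (∀ x : X, ∀ y : Y, (x, y) ∈ Ω → ∃ z ∈ Φ x, dist y z < 1 / (n : ℝ))) :
    ∀ U : Set Y, IsOpen U → IsOpen {x : X | (Φ x ∩ U).Nonempty} :=
  stmt_4_general Φ h
end

section
/- Let X be a topological space and Φ : X → set Y a set-valued map with nonempty values into a metric space (Y,ρ). Then Φ is lower semicontinuous if and only if for every ε > 0 the relation {(x,y) : dist(y, Φ(x)) < ε} is an open subset of X × Y. -/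
/-!
Lower hemicontinuity of `Φ` at `x` is exactly upper semicontinuity of `(x, y) ↦ dist(y, Φ x)`
at every `(x, y)`: a point `z ∈ Φ x` with `dist y z < ε` is moved by less than the slack
`ε - dist y z` when `x` moves a little, and conversely `dist(z, Φ x') < ε` near `x` for `z ∈ Φ x`
puts a point of `Φ x'` into any ball `ball z ε ⊆ U`. Upper semicontinuity of a nonnegative
function is openness of its strict sublevel sets at positive levels.
-/

open Set Filter Topology Metric

theorem upperSemicontinuous_iff_isOpen_preimage_Iio_of_nonneg {α : Type*} [TopologicalSpace α]
    {f : α → ℝ} (hf : ∀ a, 0 ≤ f a) :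
    UpperSemicontinuous f ↔ ∀ ε : ℝ, 0 < ε → IsOpen (f ⁻¹' Iio ε) := by
  rw [upperSemicontinuous_iff_isOpen_preimage]
  refine ⟨fun h ε _ => h ε, fun h ε => ?_⟩
  rcases lt_or_ge 0 ε with hε | hε
  · exact h ε hε
  · convert isOpen_empty
    exact eq_empty_of_forall_notMem fun a ha => (hf a).not_gt (lt_of_lt_of_le ha hε)

section InfDist

variable {X Y : Type*} [TopologicalSpace X] [PseudoMetricSpace Y] {Φ : X → Set Y} {x : X}

theorem LowerHemicontinuousAt.upperSemicontinuousAt_infDist (hΦ : LowerHemicontinuousAt Φ x)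
    (hne : (Φ x).Nonempty) (y : Y) :
    UpperSemicontinuousAt (fun p : X × Y => infDist p.2 (Φ p.1)) (x, y) := by
  intro ε (hε : infDist y (Φ x) < ε)
  obtain ⟨z, hz, hyz⟩ := (infDist_lt_iff hne).1 hε
  set δ := (ε - dist y z) / 2
  have hδ : 0 < δ := by simp only [δ]; linarith
  have hnear : ∀ᶠ x' in 𝓝 x, (Φ x' ∩ ball z δ).Nonempty :=
    lowerHemicontinuousAt_iff.1 hΦ _ isOpen_ball ⟨z, hz, mem_ball_self hδ⟩
  filter_upwards [hnear.prod_nhds (ball_mem_nhds y hδ)]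
  rintro ⟨x', y'⟩ ⟨⟨z', hz', hzz' : dist z' z < δ⟩, hyy' : dist y' y < δ⟩
  calc infDist y' (Φ x') ≤ dist y' z' := infDist_le_dist_of_mem hz'
    _ ≤ dist y' y + dist y z + dist z z' := dist_triangle4 y' y z z'
    _ < ε := by rw [dist_comm z]; simp only [δ] at hyy' hzz'; linarith

theorem LowerHemicontinuousAt.of_upperSemicontinuousAt_infDist (hne : ∀ x', (Φ x').Nonempty)
    (h : ∀ y, UpperSemicontinuousAt (fun p : X × Y => infDist p.2 (Φ p.1)) (x, y)) :
    LowerHemicontinuousAt Φ x := by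
  rw [lowerHemicontinuousAt_iff]
  rintro U hU ⟨z, hz, hzU⟩
  obtain ⟨ε, hε, hball⟩ := Metric.isOpen_iff.1 hU z hzU
  have hnear : ∀ᶠ x' in 𝓝 x, infDist z (Φ x') < ε :=
    ((continuous_id.prodMk continuous_const).tendsto x).eventually
      (h z ε (show infDist z (Φ x) < ε by rwa [infDist_zero_of_mem hz]))
  filter_upwards [hnear] with x' hx'
  obtain ⟨z', hz', hzz'⟩ := (infDist_lt_iff (hne x')).1 hx'
  exact ⟨z', hz', hball (mem_ball'.2 hzz')⟩

theorem lowerHemicontinuous_iff_upperSemicontinuous_infDist (hne : ∀ x, (Φ x).Nonempty) :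
    LowerHemicontinuous Φ ↔ UpperSemicontinuous fun p : X × Y => infDist p.2 (Φ p.1) :=
  ⟨fun h p => LowerHemicontinuousAt.upperSemicontinuousAt_infDist (h p.1) (hne p.1) p.2,
    fun h x => LowerHemicontinuousAt.of_upperSemicontinuousAt_infDist hne fun y => h (x, y)⟩

end InfDist

/-- A nonempty-valued set-valued map into a metric space is l.s.c. iff all of its
open `ε`-enlargements are open relations. -/
theorem stmt_5 {X Y : Type*} [TopologicalSpace X] [MetricSpace Y]
    (Φ : X → Set Y) (hne : ∀ x, (Φ x).Nonempty) :
    (∀ U : Set Y, IsOpen U → IsOpen {x : X | (Φ x ∩ U).Nonempty}) ↔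
      (∀ ε : ℝ, 0 < ε → IsOpen {p : X × Y | Metric.infDist p.2 (Φ p.1) < ε}) := by
  rw [← lowerHemicontinuous_iff_isOpen_inter_nonempty,
    lowerHemicontinuous_iff_upperSemicontinuous_infDist hne,
    upperSemicontinuous_iff_isOpen_preimage_Iio_of_nonneg fun _ => infDist_nonneg]
  rfl
end

section
/- Let X be a topological space and Φ : X → set ℝ a set-valued map such that each Φ(x) is a nonempty open convex subset of ℝ and Φ is lower semicontinuous. Then the graph {(x,y) : y ∈ Φ(x)} is an open subset of X × ℝ. -/
/-!
Both "halves" `{(x, y) | ∃ a ∈ Φ x, a < y}` and `{(x, y) | ∃ b ∈ Φ x, y < b}` of the graph are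
open by lower hemicontinuity alone: if `a ∈ Φ x` and `a < c < y`, then every `x'` near `x` still
has a point of `Φ x'` below `c`, which lies below every `y' > c`. For open intervals `Φ x` the
graph is exactly the intersection of the two halves.
-/

open Set

section

variable {X Y : Type*} [TopologicalSpace X] [LinearOrder Y] [TopologicalSpace Y] [OrderTopology Y]
  [DenselyOrdered Y]

theorem LowerHemicontinuous.hasOpenCGraph_setOf_exists_lt {Φ : X → Set Y}
    (hΦ : LowerHemicontinuous Φ) : HasOpenCGraph fun x ↦ {y | ∃ a ∈ Φ x, a < y} := by
  have hgraph : {p : X × Y | p.2 ∈ {y | ∃ a ∈ Φ p.1, a < y}} =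
      ⋃ c, {x | (Φ x ∩ Iio c).Nonempty} ×ˢ Ioi c := by
    ext ⟨x, y⟩
    simp only [mem_ofPred_eq, mem_iUnion, mem_prod, mem_Ioi]
    constructor
    · rintro ⟨a, ha, hay⟩
      obtain ⟨c, hac, hcy⟩ := exists_between hay
      exact ⟨c, ⟨a, ha, hac⟩, hcy⟩
    · rintro ⟨c, ⟨a, ha, hac⟩, hcy⟩
      exact ⟨a, ha, hac.trans hcy⟩
  rw [HasOpenCGraph, hgraph]
  exact isOpen_iUnion fun c ↦
    (lowerHemicontinuous_iff_isOpen_inter_nonempty.1 hΦ _ isOpen_Iio).prod isOpen_Ioi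

theorem LowerHemicontinuous.hasOpenCGraph_setOf_exists_gt {Φ : X → Set Y}
    (hΦ : LowerHemicontinuous Φ) : HasOpenCGraph fun x ↦ {y | ∃ b ∈ Φ x, y < b} :=
  LowerHemicontinuous.hasOpenCGraph_setOf_exists_lt (Y := Yᵒᵈ) hΦ

theorem IsOpen.eq_setOf_exists_lt_inter_setOf_exists_gt [NoMinOrder Y] [NoMaxOrder Y]
    {s : Set Y} (hs : IsOpen s) (hsc : s.OrdConnected) :
    s = {y | ∃ a ∈ s, a < y} ∩ {y | ∃ b ∈ s, y < b} := by
  ext y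
  constructor
  · intro hy
    obtain ⟨l, u, ⟨hly, hyu⟩, hlu⟩ := mem_nhds_iff_exists_Ioo_subset.1 (hs.mem_nhds hy)
    obtain ⟨a, hla, hay⟩ := exists_between hly
    obtain ⟨b, hyb, hbu⟩ := exists_between hyu
    exact ⟨⟨a, hlu ⟨hla, hay.trans hyu⟩, hay⟩, ⟨b, hlu ⟨hly.trans hyb, hbu⟩, hyb⟩⟩
  · rintro ⟨⟨a, ha, hay⟩, ⟨b, hb, hyb⟩⟩
    exact hsc.out ha hb ⟨hay.le, hyb.le⟩

theorem LowerHemicontinuous.hasOpenCGraph_of_ordConnected [NoMinOrder Y] [NoMaxOrder Y]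
    {Φ : X → Set Y} (hΦ : LowerHemicontinuous Φ) (hop : ∀ x, IsOpen (Φ x))
    (hoc : ∀ x, (Φ x).OrdConnected) : HasOpenCGraph Φ := by
  have hΦeq : Φ = fun x ↦ {y | ∃ a ∈ Φ x, a < y} ∩ {y | ∃ b ∈ Φ x, y < b} :=
    funext fun x ↦ (hop x).eq_setOf_exists_lt_inter_setOf_exists_gt (hoc x)
  rw [hΦeq]
  exact hΦ.hasOpenCGraph_setOf_exists_lt.inter hΦ.hasOpenCGraph_setOf_exists_gt

end

theorem stmt_6_general {X : Type*} [TopologicalSpace X]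
    (Φ : X → Set ℝ)
    (hop : ∀ x, IsOpen (Φ x)) (hcv : ∀ x, Convex ℝ (Φ x))
    (hlsc : ∀ U : Set ℝ, IsOpen U → IsOpen {x : X | (Φ x ∩ U).Nonempty}) :
    IsOpen {p : X × ℝ | p.2 ∈ Φ p.1} :=
  (lowerHemicontinuous_iff_isOpen_inter_nonempty.2 hlsc).hasOpenCGraph_of_ordConnected hop
    fun x ↦ (hcv x).ordConnected

/-- An l.s.c. set-valued map `Φ : X → Set ℝ` with nonempty open convex values
has open graph in `X × ℝ`. -/
theorem stmt_6 {X : Type*} [TopologicalSpace X]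
    (Φ : X → Set ℝ)
    (hne : ∀ x, (Φ x).Nonempty) (hop : ∀ x, IsOpen (Φ x)) (hcv : ∀ x, Convex ℝ (Φ x))
    (hlsc : ∀ U : Set ℝ, IsOpen U → IsOpen {x : X | (Φ x ∩ U).Nonempty}) :
    IsOpen {p : X × ℝ | p.2 ∈ Φ p.1} :=
  stmt_6_general Φ hop hcv hlsc
end

section
/- Let X be a topological space. A set-valued map Φ : X → set ℝ with values in the open interval (-1,1) has open graph in X × ℝ and nonempty open convex values if and only if there exist functions ξ, η : X → [-1,1] with ξ upper semicontinuous, η lower semicontinuous, ξ(x) < η(x) for all x, and Φ(x) equal to the open interval (ξ(x), η(x)) for all x ∈ X. -/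
/-! An open convex bounded nonempty set of reals is the open interval between its infimum and
supremum, so `Φ x = (sInf (Φ x), sSup (Φ x))`. Openness of the graph near `(x, z)` with
`z ∈ Φ x` just above `sInf (Φ x)` keeps `z` in `Φ x'` for `x'` near `x`, which is upper
semicontinuity of the infimum; dually for the supremum. Conversely the graph of
`x ↦ (ξ x, η x)` is the intersection of the complements of the closed hypograph of `ξ` and the
closed epigraph of `η`. -/

open Set

section Interval

variable {α : Type*} [ConditionallyCompleteLinearOrder α] [TopologicalSpace α] [OrderTopology α]
  [DenselyOrdered α] [NoMinOrder α] [NoMaxOrder α] {s : Set α}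

theorem IsOpen.subset_Ioo_csInf_csSup (hs : IsOpen s) (hb : BddBelow s) (ha : BddAbove s) :
    s ⊆ Ioo (sInf s) (sSup s) := by
  intro y hy
  obtain ⟨l, u, ⟨hly, hyu⟩, hlu⟩ := mem_nhds_iff_exists_Ioo_subset.mp (hs.mem_nhds hy)
  obtain ⟨y₁, hly₁, hy₁y⟩ := exists_between hly
  obtain ⟨y₂, hyy₂, hy₂u⟩ := exists_between hyu
  exact ⟨csInf_lt_of_lt hb (hlu ⟨hly₁, hy₁y.trans hyu⟩) hy₁y,
    lt_csSup_of_lt ha (hlu ⟨hly.trans hyy₂, hy₂u⟩) hyy₂⟩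

theorem IsOpen.eq_Ioo_csInf_csSup (hs : IsOpen s) (hc : IsConnected s) (hb : BddBelow s)
    (ha : BddAbove s) : s = Ioo (sInf s) (sSup s) :=
  (hs.subset_Ioo_csInf_csSup hb ha).antisymm (hc.Ioo_csInf_csSup_subset hb ha)

end Interval

section Graph

variable {X α : Type*} [TopologicalSpace X] [TopologicalSpace α]

section ConditionallyComplete

variable [ConditionallyCompleteLinearOrder α] {Φ : X → Set α}

theorem HasOpenCGraph.upperSemicontinuous_csInf (hΦ : HasOpenCGraph Φ)
    (hne : ∀ x, (Φ x).Nonempty) (hb : ∀ x, BddBelow (Φ x)) :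
    UpperSemicontinuous fun x ↦ sInf (Φ x) := by
  intro x r hr
  obtain ⟨z, hz, hzr⟩ := exists_lt_of_csInf_lt (hne x) hr
  filter_upwards [hΦ.hasOpenLowerSections x z hz] with x' hx'
  exact (csInf_le (hb x') hx').trans_lt hzr

theorem HasOpenCGraph.lowerSemicontinuous_csSup (hΦ : HasOpenCGraph Φ)
    (hne : ∀ x, (Φ x).Nonempty) (ha : ∀ x, BddAbove (Φ x)) :
    LowerSemicontinuous fun x ↦ sSup (Φ x) :=
  HasOpenCGraph.upperSemicontinuous_csInf (α := αᵒᵈ) hΦ hne ha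

end ConditionallyComplete

theorem hasOpenCGraph_Ioo [LinearOrder α] [ClosedIicTopology α] [ClosedIciTopology α]
    {ξ η : X → α} (hξ : UpperSemicontinuous ξ) (hη : LowerSemicontinuous η) :
    HasOpenCGraph fun x ↦ Ioo (ξ x) (η x) := by
  have hgraph : {p : X × α | p.2 ∈ Ioo (ξ p.1) (η p.1)} =
      {p | p.2 ≤ ξ p.1}ᶜ ∩ {p | η p.1 ≤ p.2}ᶜ := by
    ext p
    simp
  rw [HasOpenCGraph, hgraph]
  exact hξ.IsClosed_hypograph.isOpen_compl.inter hη.isClosed_epigraph.isOpen_compl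

end Graph

/-- A set-valued map `Φ : X → Set ℝ` with values in `(-1,1)` has open graph and
nonempty open convex values iff `Φ(x) = (ξ(x), η(x))` for an upper semicontinuous
`ξ` and a lower semicontinuous `η` with values in `[-1,1]` and `ξ < η`. -/
theorem stmt_7 {X : Type*} [TopologicalSpace X]
    (Φ : X → Set ℝ) (hsub : ∀ x, Φ x ⊆ Set.Ioo (-1 : ℝ) 1) :
    (IsOpen {p : X × ℝ | p.2 ∈ Φ p.1} ∧
      ∀ x, (Φ x).Nonempty ∧ IsOpen (Φ x) ∧ Convex ℝ (Φ x)) ↔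
    (∃ ξ η : X → ℝ,
      (∀ x, ξ x ∈ Set.Icc (-1 : ℝ) 1) ∧ (∀ x, η x ∈ Set.Icc (-1 : ℝ) 1) ∧
      UpperSemicontinuous ξ ∧ LowerSemicontinuous η ∧
      (∀ x, ξ x < η x) ∧ ∀ x, Φ x = Set.Ioo (ξ x) (η x)) := by
  constructor
  · rintro ⟨hgraph, hvals⟩
    choose hne hopen hconv using hvals
    have hbb : ∀ x, BddBelow (Φ x) := fun x ↦ bddBelow_Ioo.mono (hsub x)
    have hba : ∀ x, BddAbove (Φ x) := fun x ↦ bddAbove_Ioo.mono (hsub x)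
    have hΦ : ∀ x, Φ x = Ioo (sInf (Φ x)) (sSup (Φ x)) := fun x ↦
      (hopen x).eq_Ioo_csInf_csSup ⟨hne x, (hconv x).isPreconnected⟩ (hbb x) (hba x)
    have hlt : ∀ x, sInf (Φ x) < sSup (Φ x) := fun x ↦ nonempty_Ioo.mp (hΦ x ▸ hne x)
    have hbounds : ∀ x, -1 ≤ sInf (Φ x) ∧ sSup (Φ x) ≤ 1 := fun x ↦
      (Ioo_subset_Ioo_iff (hlt x)).mp (hΦ x ▸ hsub x)
    exact ⟨_, _, fun x ↦ ⟨(hbounds x).1, (hlt x).le.trans (hbounds x).2⟩,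
      fun x ↦ ⟨(hbounds x).1.trans (hlt x).le, (hbounds x).2⟩,
      HasOpenCGraph.upperSemicontinuous_csInf hgraph hne hbb,
      HasOpenCGraph.lowerSemicontinuous_csSup hgraph hne hba, hlt, hΦ⟩
  · rintro ⟨ξ, η, -, -, hξ, hη, hlt, hΦ⟩
    simp only [hΦ]
    exact ⟨hasOpenCGraph_Ioo hξ hη, fun x ↦ ⟨nonempty_Ioo.mpr (hlt x), isOpen_Ioo, convex_Ioo _ _⟩⟩
end

section
/- Let X be a topological space with the property that every open relation Φ ⊆ X × ℝ whose fibers are nonempty and convex admits a continuous selection. Then for every upper semicontinuous ξ : X → ℝ and lower semicontinuous η : X → ℝ with ξ(x) < η(x) for all x, there exists a continuous f : X → ℝ with ξ(x) < f(x) < η(x) for all x. Conversely, this insertion property implies the selection property. -/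
/-!
Selection gives insertion by selecting from the open relation `ξ x < y < η x`, which is open
because the hypograph of `ξ` and the epigraph of `η` are closed.

For the converse, squeeze the fibers into `(-π/2, π/2)` by `arctan`. If `Φ` is open, then
`ξ x = inf (arctan '' Φ x)` is upper and `η x = sup (arctan '' Φ x)` lower semicontinuous,
since `{x | ξ x < r}` is the projection of the open set `Φ ∩ {arctan y < r}`. Fibers of an open
set are infinite, so `ξ < η`; a continuous `u` inserted between them lies in
`(-π/2, π/2)`, and `tan ∘ u` is a selection because the fibers are order-connected.
-/

open Set Real

section FiberBounds

variable {X Y β : Type*} [TopologicalSpace X] [TopologicalSpace Y]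
  [ConditionallyCompleteLinearOrder β] [TopologicalSpace β] [OrderTopology β]

theorem IsOpen.upperSemicontinuous_sInf_image_fiber {Φ : Set (X × Y)} (hΦ : IsOpen Φ)
    {g : Y → β} (hg : Continuous g) (hne : ∀ x, {y | (x, y) ∈ Φ}.Nonempty)
    (hbdd : ∀ x, BddBelow (g '' {y | (x, y) ∈ Φ})) :
    UpperSemicontinuous fun x => sInf (g '' {y | (x, y) ∈ Φ}) := by
  refine upperSemicontinuous_iff_isOpen_preimage.2 fun r => ?_
  have hpre : (fun x => sInf (g '' {y | (x, y) ∈ Φ})) ⁻¹' Iio r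
      = Prod.fst '' (Φ ∩ Prod.snd ⁻¹' (g ⁻¹' Iio r)) := by
    ext x
    simp only [mem_preimage, mem_Iio, mem_image, mem_inter_iff]
    constructor
    · intro h
      obtain ⟨_, ⟨y, hy, rfl⟩, hyr⟩ := exists_lt_of_csInf_lt ((hne x).image g) h
      exact ⟨(x, y), ⟨hy, hyr⟩, rfl⟩
    · rintro ⟨⟨x, y⟩, ⟨hy, hyr⟩, rfl⟩
      exact csInf_lt_of_lt (hbdd x) (mem_image_of_mem g hy) hyr
  rw [hpre]
  exact isOpenMap_fst _ (hΦ.inter ((isOpen_Iio.preimage hg).preimage continuous_snd))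

theorem IsOpen.lowerSemicontinuous_sSup_image_fiber {Φ : Set (X × Y)} (hΦ : IsOpen Φ)
    {g : Y → β} (hg : Continuous g) (hne : ∀ x, {y | (x, y) ∈ Φ}.Nonempty)
    (hbdd : ∀ x, BddAbove (g '' {y | (x, y) ∈ Φ})) :
    LowerSemicontinuous fun x => sSup (g '' {y | (x, y) ∈ Φ}) :=
  IsOpen.upperSemicontinuous_sInf_image_fiber (β := βᵒᵈ) hΦ hg hne hbdd

end FiberBounds

theorem Set.Nontrivial.csInf_lt_csSup {α : Type*} [ConditionallyCompleteLinearOrder α]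
    {s : Set α} (hs : s.Nontrivial) (hbb : BddBelow s) (hba : BddAbove s) :
    sInf s < sSup s := by
  obtain ⟨a, ha, b, hb, hab⟩ := hs
  rcases hab.lt_or_gt with h | h
  · exact (csInf_le hbb ha).trans_lt (h.trans_le (le_csSup hba hb))
  · exact (csInf_le hbb hb).trans_lt (h.trans_le (le_csSup hba ha))

theorem Real.bddBelow_arctan_image (s : Set ℝ) : BddBelow (arctan '' s) :=
  ⟨-(π / 2), forall_mem_image.2 fun y _ => (arctan_mem_Ioo y).1.le⟩

theorem Real.bddAbove_arctan_image (s : Set ℝ) : BddAbove (arctan '' s) :=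
  ⟨π / 2, forall_mem_image.2 fun y _ => (arctan_mem_Ioo y).2.le⟩

theorem Set.OrdConnected.tan_mem_of_mem_Ioo_arctan_image {s : Set ℝ} (hs : s.OrdConnected)
    {t : ℝ} (ht : t ∈ Ioo (sInf (arctan '' s)) (sSup (arctan '' s))) :
    t ∈ Ioo (-(π / 2)) (π / 2) ∧ tan t ∈ s := by
  have hne : (arctan '' s).Nonempty := by
    by_contra h
    simp only [not_nonempty_iff_eq_empty.1 h, Real.sInf_empty, Real.sSup_empty, mem_Ioo] at ht
    exact ht.1.not_gt ht.2
  obtain ⟨_, ⟨a, ha, rfl⟩, hat⟩ := exists_lt_of_csInf_lt hne ht.1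
  obtain ⟨_, ⟨b, hb, rfl⟩, htb⟩ := exists_lt_of_lt_csSup hne ht.2
  have ht' : t ∈ Ioo (-(π / 2)) (π / 2) :=
    ⟨(arctan_mem_Ioo a).1.trans hat, htb.trans (arctan_mem_Ioo b).2⟩
  have harctan : arctan (tan t) = t := arctan_tan ht'.1 ht'.2
  refine ⟨ht', hs.out ha hb ⟨?_, ?_⟩⟩
  · exact (arctan_lt_arctan_iff.1 (by rwa [harctan])).le
  · exact (arctan_lt_arctan_iff.1 (by rwa [harctan])).le

section Properties

variable (X : Type*) [TopologicalSpace X]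

def ConvexSelectionProperty : Prop :=
  ∀ Φ : Set (X × ℝ), IsOpen Φ →
    (∀ x : X, {y : ℝ | (x, y) ∈ Φ}.Nonempty ∧ Convex ℝ {y : ℝ | (x, y) ∈ Φ}) →
    ∃ f : X → ℝ, Continuous f ∧ ∀ x : X, (x, f x) ∈ Φ

def InsertionProperty : Prop :=
  ∀ ξ η : X → ℝ, UpperSemicontinuous ξ → LowerSemicontinuous η → (∀ x, ξ x < η x) →
    ∃ f : X → ℝ, Continuous f ∧ ∀ x, ξ x < f x ∧ f x < η x

variable {X}

theorem ConvexSelectionProperty.insertionProperty (hsel : ConvexSelectionProperty X) :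
    InsertionProperty X := by
  intro ξ η hξ hη hlt
  have hopen : IsOpen {p : X × ℝ | ξ p.1 < p.2 ∧ p.2 < η p.1} := by
    have h := hξ.IsClosed_hypograph.isOpen_compl.inter hη.isClosed_epigraph.isOpen_compl
    simpa only [compl_ofPred, not_le, ofPred_and] using h
  exact hsel _ hopen fun x => ⟨nonempty_Ioo.2 (hlt x), convex_Ioo (ξ x) (η x)⟩

theorem InsertionProperty.convexSelectionProperty (hins : InsertionProperty X) :
    ConvexSelectionProperty X := by
  intro Φ hΦ hfib
  have hnontriv : ∀ x, {y | (x, y) ∈ Φ}.Nontrivial := fun x =>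
    have ⟨y, hy⟩ := (hfib x).1
    (infinite_of_mem_nhds y ((hΦ.preimage (.prodMk_right x)).mem_nhds hy)).nontrivial
  have hlt : ∀ x, sInf (arctan '' {y | (x, y) ∈ Φ}) < sSup (arctan '' {y | (x, y) ∈ Φ}) :=
    fun x => ((hnontriv x).image arctan_strictMono.injective).csInf_lt_csSup
      (bddBelow_arctan_image _) (bddAbove_arctan_image _)
  obtain ⟨u, hu, hu_mem⟩ := hins _ _
    (hΦ.upperSemicontinuous_sInf_image_fiber continuous_arctan (fun x => (hfib x).1)
      fun _ => bddBelow_arctan_image _)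
    (hΦ.lowerSemicontinuous_sSup_image_fiber continuous_arctan (fun x => (hfib x).1)
      fun _ => bddAbove_arctan_image _) hlt
  have htan x := (convex_iff_ordConnected.1 (hfib x).2).tan_mem_of_mem_Ioo_arctan_image (hu_mem x)
  exact ⟨fun x => tan (u x), continuousOn_tan_Ioo.comp_continuous hu fun x => (htan x).1,
    fun x => (htan x).2⟩

end Properties

/-- The selection property for convex-valued open relations `Φ ⊆ X × ℝ` is
equivalent to the Dowker–Katětov insertion property. -/
theorem stmt_8 {X : Type*} [TopologicalSpace X] :
    (∀ Φ : Set (X × ℝ), IsOpen Φ →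
      (∀ x : X, {y : ℝ | (x, y) ∈ Φ}.Nonempty ∧ Convex ℝ {y : ℝ | (x, y) ∈ Φ}) →
      ∃ f : X → ℝ, Continuous f ∧ ∀ x : X, (x, f x) ∈ Φ) ↔
    (∀ ξ η : X → ℝ, UpperSemicontinuous ξ → LowerSemicontinuous η →
      (∀ x, ξ x < η x) →
      ∃ f : X → ℝ, Continuous f ∧ ∀ x, ξ x < f x ∧ f x < η x) :=
  ⟨ConvexSelectionProperty.insertionProperty, InsertionProperty.convexSelectionProperty⟩
end

section
/- Let X be a countably paracompact normal topological space and E a separable topological vector space over ℝ. Then every open relation Φ ⊆ X × E whose fibers Φ(x) are nonempty and convex admits a continuous selection f : X → E. -/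
open Set TopologicalSpace

/-!
Pick a dense sequence `(c n)` in `E`. Since the fibers of `Φ` are open and nonempty, the open sets
`U n = {x | (x, c n) ∈ Φ}` cover `X`. Countable paracompactness and normality give a partition of
unity `(φ n)` subordinate to `(U n)`, and `x ↦ ∑ n, φ n x • c n` is continuous and, by
convexity of the fibers, lies in `Φ(x)`.
-/

/-- A space is countably paracompact if every countable open cover has a locally
finite open (indexed) refinement. -/
def CountablyParacompact (X : Type*) [TopologicalSpace X] : Prop :=
  ∀ U : ℕ → Set X, (∀ n, IsOpen (U n)) → (⋃ n, U n) = Set.univ →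
    ∃ V : ℕ → Set X, (∀ n, IsOpen (V n)) ∧ (⋃ n, V n) = Set.univ ∧
      (∀ n, V n ⊆ U n) ∧ LocallyFinite V

namespace CountablyParacompact

variable {X : Type*} [TopologicalSpace X] [NormalSpace X]

theorem exists_isSubordinate (hcp : CountablyParacompact X) {U : ℕ → Set X}
    (ho : ∀ n, IsOpen (U n)) (hU : ⋃ n, U n = univ) :
    ∃ f : PartitionOfUnity ℕ X univ, f.IsSubordinate U := by
  obtain ⟨V, hVo, hVcov, hVU, hVlf⟩ := hcp U ho hU
  obtain ⟨f, hf⟩ :=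
    PartitionOfUnity.exists_isSubordinate_of_locallyFinite isClosed_univ V hVo hVlf hVcov.ge
  exact ⟨f, fun n => (hf n).trans (hVU n)⟩

theorem exists_continuous_forall_mem_convex_of_seq {E : Type*} [AddCommGroup E] [Module ℝ E]
    [TopologicalSpace E] [ContinuousAdd E] [ContinuousSMul ℝ E]
    (hcp : CountablyParacompact X) {t : X → Set E} (ht : ∀ x, Convex ℝ (t x)) {c : ℕ → E}
    (ho : ∀ n, IsOpen {x | c n ∈ t x}) (hc : ∀ x, ∃ n, c n ∈ t x) :
    ∃ g : C(X, E), ∀ x, g x ∈ t x := by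
  obtain ⟨f, hf⟩ := hcp.exists_isSubordinate ho
    (eq_univ_of_forall fun x => mem_iUnion.2 (hc x))
  exact ⟨⟨fun x => ∑ᶠ n, f n x • c n,
      hf.continuous_finsum_smul ho fun _ => continuousOn_const⟩,
    fun x => f.finsum_smul_mem_convex (g := fun n _ => c n) (mem_univ x)
      (fun n hn => hf n (subset_tsupport _ hn)) (ht x)⟩

end CountablyParacompact

theorem stmt_9_general {X E : Type*} [TopologicalSpace X] [NormalSpace X]
    (hcp : CountablyParacompact X)
    [AddCommGroup E] [Module ℝ E] [TopologicalSpace E]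
    [IsTopologicalAddGroup E] [ContinuousSMul ℝ E] [TopologicalSpace.SeparableSpace E]
    (Φ : Set (X × E)) (hΦ : IsOpen Φ)
    (hfib : ∀ x : X, {y : E | (x, y) ∈ Φ}.Nonempty ∧ Convex ℝ {y : E | (x, y) ∈ Φ}) :
    ∃ f : X → E, Continuous f ∧ ∀ x : X, (x, f x) ∈ Φ := by
  rcases isEmpty_or_nonempty X with _ | ⟨⟨x₀⟩⟩
  · exact ⟨isEmptyElim, continuous_of_discreteTopology, isEmptyElim⟩
  have : Nonempty E := ⟨(hfib x₀).1.some⟩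
  obtain ⟨g, hg⟩ := hcp.exists_continuous_forall_mem_convex_of_seq
    (t := fun x => {y | (x, y) ∈ Φ}) (fun x => (hfib x).2) (c := denseSeq E)
    (fun n => hΦ.preimage (Continuous.prodMk_left (denseSeq E n)))
    (fun x => (denseRange_denseSeq E).exists_mem_open
      (hΦ.preimage (Continuous.prodMk_right x)) (hfib x).1)
  exact ⟨g, g.continuous, hg⟩

/-- On a countably paracompact normal space, every convex-valued open relation
into a separable topological vector space has a continuous selection. -/
theorem stmt_9 {X E : Type*} [TopologicalSpace X] [T2Space X] [NormalSpace X]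
    (hcp : CountablyParacompact X)
    [AddCommGroup E] [Module ℝ E] [TopologicalSpace E] [T2Space E]
    [IsTopologicalAddGroup E] [ContinuousSMul ℝ E] [TopologicalSpace.SeparableSpace E]
    (Φ : Set (X × E)) (hΦ : IsOpen Φ)
    (hfib : ∀ x : X, {y : E | (x, y) ∈ Φ}.Nonempty ∧ Convex ℝ {y : E | (x, y) ∈ Φ}) :
    ∃ f : X → E, Continuous f ∧ ∀ x : X, (x, f x) ∈ Φ :=
  stmt_9_general hcp Φ hΦ hfib
end

section
/- Let X be a topological space such that every open relation Φ ⊆ X × ℝ with nonempty convex fibers admits a continuous selection. Then X is countably paracompact: every countable open cover of X, indexed by ℕ, admits a locally finite open refinement. -/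
/-!
For an open cover `U` indexed by `ℕ`, the open relation `{(x, y) | x ∈ U n for some n < y}` has
nonempty upward-closed fibers. A continuous selection `f` attaches to every `x` an index `n < f x`
with `x ∈ U n`, so the sets `U n ∩ {n < f}` still cover `X`; near `x` only the finitely many
indices `n < f x + 1` survive, which makes this refinement locally finite.
-/

open Set

lemma locallyFinite_Ioi_natCast : LocallyFinite fun n : ℕ => Ioi (n : ℝ) := by
  intro y
  refine ⟨Iio (y + 1), Iio_mem_nhds (lt_add_one y), ?_⟩
  refine (finite_lt_nat ⌈y + 1⌉₊).subset fun n ⟨z, hnz, hzy⟩ => ?_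
  exact Nat.lt_ceil.2 ((mem_Ioi.1 hnz).trans hzy)

section CoverHeightRel

variable {X : Type*} (U : ℕ → Set X)

def coverHeightRel : Set (X × ℝ) := ⋃ n, U n ×ˢ Ioi (n : ℝ)

variable {U}

lemma mem_coverHeightRel {x : X} {y : ℝ} :
    (x, y) ∈ coverHeightRel U ↔ ∃ n, x ∈ U n ∧ (n : ℝ) < y := by
  simp [coverHeightRel]

lemma isOpen_coverHeightRel [TopologicalSpace X] (hU : ∀ n, IsOpen (U n)) :
    IsOpen (coverHeightRel U) :=
  isOpen_iUnion fun n => (hU n).prod isOpen_Ioi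

lemma isUpperSet_fiber_coverHeightRel (x : X) :
    IsUpperSet {y : ℝ | (x, y) ∈ coverHeightRel U} := by
  intro y z hyz hy
  obtain ⟨n, hxn, hny⟩ := mem_coverHeightRel.1 hy
  exact mem_coverHeightRel.2 ⟨n, hxn, hny.trans_le hyz⟩

lemma nonempty_fiber_coverHeightRel {x : X} (hx : x ∈ ⋃ n, U n) :
    {y : ℝ | (x, y) ∈ coverHeightRel U}.Nonempty := by
  obtain ⟨n, hxn⟩ := mem_iUnion.1 hx
  exact ⟨n + 1, mem_coverHeightRel.2 ⟨n, hxn, lt_add_one _⟩⟩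

end CoverHeightRel

/-- If every convex-valued open relation `Φ ⊆ X × ℝ` admits a continuous
selection, then `X` is countably paracompact. -/
theorem stmt_10 {X : Type*} [TopologicalSpace X]
    (h : ∀ Φ : Set (X × ℝ), IsOpen Φ →
      (∀ x : X, {y : ℝ | (x, y) ∈ Φ}.Nonempty ∧ Convex ℝ {y : ℝ | (x, y) ∈ Φ}) →
      ∃ f : X → ℝ, Continuous f ∧ ∀ x : X, (x, f x) ∈ Φ) :
    ∀ U : ℕ → Set X, (∀ n, IsOpen (U n)) → (⋃ n, U n) = Set.univ →
      ∃ V : ℕ → Set X, (∀ n, IsOpen (V n)) ∧ (⋃ n, V n) = Set.univ ∧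
        (∀ n, V n ⊆ U n) ∧ LocallyFinite V := by
  intro U hUo hUc
  obtain ⟨f, hf, hfΦ⟩ := h (coverHeightRel U) (isOpen_coverHeightRel hUo) fun x =>
    ⟨nonempty_fiber_coverHeightRel (hUc ▸ mem_univ x),
      (isUpperSet_fiber_coverHeightRel x).ordConnected.convex⟩
  refine ⟨fun n => U n ∩ f ⁻¹' Ioi (n : ℝ), fun n => (hUo n).inter (isOpen_Ioi.preimage hf),
    ?_, fun n => inter_subset_left,
    (locallyFinite_Ioi_natCast.preimage_continuous hf).subset fun n => inter_subset_right⟩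
  refine eq_univ_of_forall fun x => ?_
  obtain ⟨n, hxn, hnf⟩ := mem_coverHeightRel.1 (hfΦ x)
  exact mem_iUnion.2 ⟨n, hxn, hnf⟩
end

section
/- Let X be a topological space. Then X is countably paracompact and normal if and only if every lower semicontinuous set-valued map Φ : X → set ℝ whose values are nonempty open convex subsets of ℝ admits a continuous selection. -/
/-! For open convex values, `q ∈ Φ x` iff `Φ x` meets both `(-∞, q)` and `(q, ∞)`, so lower
semicontinuity makes each `{x | q ∈ Φ x}` open; for `q` running through a countable dense subset
of `ℝ` these sets cover `X`. Countable paracompactness gives a locally finite open refinement,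
normality a partition of unity subordinate to it, and gluing the constants `q` with that partition
stays inside `Φ x` by convexity.

Conversely, if `a` is upper and `b` lower semicontinuous with `a < b`, then `x ↦ (a x, b x)` is
lower semicontinuous with nonempty open convex values, so its selections are continuous functions
strictly between `a` and `b`. Inserting such a function between suitable indicator functions of two
disjoint closed sets separates them by its sign. For an open cover `(U n)`, inserting `f` between
`0` and `1 / (m x + 1)`, where `m x` is the first index with `x ∈ U (m x)`, makes
`U n ∩ {f < 1 / (n + 1)}` a refinement, locally finite because `f` is locally
bounded away from `0`. -/

section

open Set Filter Topology

section Order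

variable {X α : Type*} [TopologicalSpace X] [LinearOrder α]

theorem IsOpen.mem_iff_inter_Iio_nonempty_and_inter_Ioi_nonempty [TopologicalSpace α]
    [OrderTopology α] [DenselyOrdered α] [NoMinOrder α] [NoMaxOrder α] {S : Set α}
    (hS : IsOpen S) (hc : S.OrdConnected) {q : α} :
    q ∈ S ↔ (S ∩ Iio q).Nonempty ∧ (S ∩ Ioi q).Nonempty := by
  refine ⟨fun hq => ⟨?_, ?_⟩, fun ⟨⟨a, ha, haq⟩, ⟨b, hb, hqb⟩⟩ => hc.out ha hb ⟨haq.le, hqb.le⟩⟩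
  · exact nonempty_of_mem (inter_mem (mem_nhdsWithin_of_mem_nhds (hS.mem_nhds hq))
      (self_mem_nhdsWithin (a := q) (s := Iio q)))
  · exact nonempty_of_mem (inter_mem (mem_nhdsWithin_of_mem_nhds (hS.mem_nhds hq))
      (self_mem_nhdsWithin (a := q) (s := Ioi q)))

theorem isOpen_setOf_mem_of_isOpen_inter_nonempty [TopologicalSpace α] [OrderTopology α]
    [DenselyOrdered α] [NoMinOrder α] [NoMaxOrder α] {Φ : X → Set α}
    (hop : ∀ x, IsOpen (Φ x)) (hc : ∀ x, (Φ x).OrdConnected)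
    (hlsc : ∀ U : Set α, IsOpen U → IsOpen {x | (Φ x ∩ U).Nonempty}) (q : α) :
    IsOpen {x | q ∈ Φ x} := by
  simp_rw [(hop _).mem_iff_inter_Iio_nonempty_and_inter_Ioi_nonempty (hc _)]
  exact (hlsc _ isOpen_Iio).inter (hlsc _ isOpen_Ioi)

theorem isOpen_setOf_Ioo_inter_nonempty {a b : X → α} (ha : UpperSemicontinuous a)
    (hb : LowerSemicontinuous b) (W : Set α) : IsOpen {x | (Ioo (a x) (b x) ∩ W).Nonempty} := by
  have : {x | (Ioo (a x) (b x) ∩ W).Nonempty} = ⋃ w ∈ W, a ⁻¹' Iio w ∩ b ⁻¹' Ioi w := by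
    ext x
    simp only [Set.Nonempty, mem_inter_iff, mem_Ioo, mem_iUnion, mem_preimage,
      mem_Iio, mem_Ioi, exists_prop]
    grind
  rw [this]
  exact isOpen_biUnion fun w _ => (upperSemicontinuous_iff_isOpen_preimage.1 ha w).inter
    (lowerSemicontinuous_iff_isOpen_preimage.1 hb w)

open Classical in
theorem lowerSemicontinuous_comp_nat_find {U : ℕ → Set X} (hU : ∀ n, IsOpen (U n))
    (hex : ∀ x, ∃ n, x ∈ U n) {c : ℕ → α} (hc : Antitone c) :
    LowerSemicontinuous fun x => c (Nat.find (hex x)) := by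
  refine lowerSemicontinuous_iff_isOpen_preimage.2 fun y => ?_
  have : (fun x => c (Nat.find (hex x))) ⁻¹' Ioi y = ⋃ n ∈ {n | y < c n}, U n := by
    ext x
    simp only [mem_preimage, mem_Ioi, mem_iUnion, exists_prop]
    exact ⟨fun h => ⟨_, h, Nat.find_spec (hex x)⟩,
      fun ⟨n, hn, hx⟩ => hn.trans_le (hc (Nat.find_min' (hex x) hx))⟩
  rw [this]
  exact isOpen_biUnion fun n _ => hU n

end Order

theorem locallyFinite_preimage_Iio {ι X : Type*} [TopologicalSpace X] {f : X → ℝ}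
    (hf : Continuous f) (hpos : ∀ x, 0 < f x) {c : ι → ℝ} (hc : Tendsto c cofinite (𝓝 0)) :
    LocallyFinite fun i => f ⁻¹' Iio (c i) := by
  intro x
  refine ⟨f ⁻¹' Ioi (f x / 2), (isOpen_Ioi.preimage hf).mem_nhds (half_lt_self (hpos x)), ?_⟩
  refine (eventually_cofinite.1 (hc.eventually (gt_mem_nhds (half_pos (hpos x))))).subset ?_
  rintro i ⟨y, hyc, hyx⟩
  exact fun hci => (hyx.trans hyc).not_gt hci

theorem exists_continuous_forall_mem_convex_of_locallyFinite {ι X E : Type*}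
    [TopologicalSpace X] [NormalSpace X] [AddCommGroup E] [Module ℝ E] [TopologicalSpace E]
    [ContinuousAdd E] [ContinuousSMul ℝ E] {t : X → Set E} (ht : ∀ x, Convex ℝ (t x))
    {U : ι → Set X} (ho : ∀ i, IsOpen (U i)) (hf : LocallyFinite U) (hU : ⋃ i, U i = univ)
    (c : ι → E) (hc : ∀ i, ∀ x ∈ U i, c i ∈ t x) :
    ∃ g : X → E, Continuous g ∧ ∀ x, g x ∈ t x := by
  obtain ⟨ρ, hρ⟩ :=
    PartitionOfUnity.exists_isSubordinate_of_locallyFinite isClosed_univ U ho hf hU.ge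
  exact ⟨fun x => ∑ᶠ i, ρ i x • c i, hρ.continuous_finsum_smul ho fun i => continuousOn_const,
    fun x => ρ.finsum_smul_mem_convex (g := fun i _ => c i) (mem_univ x)
      (fun i hi => hc i x (hρ i (subset_closure hi))) (ht x)⟩

def HasOpenConvexSelection (X : Type*) [TopologicalSpace X] : Prop :=
  ∀ Φ : X → Set ℝ,
    (∀ x, (Φ x).Nonempty) → (∀ x, IsOpen (Φ x)) → (∀ x, Convex ℝ (Φ x)) →
    (∀ U : Set ℝ, IsOpen U → IsOpen {x : X | (Φ x ∩ U).Nonempty}) →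
    ∃ f : X → ℝ, Continuous f ∧ ∀ x, f x ∈ Φ x

namespace HasOpenConvexSelection

variable {X : Type*} [TopologicalSpace X]

theorem of_countablyParacompact [NormalSpace X] (hcp : CountablyParacompact X) :
    HasOpenConvexSelection X := by
  intro Φ hne hop hconv hlsc
  have hc : ∀ x, (Φ x).OrdConnected := fun x => (hconv x).ordConnected
  obtain ⟨V, hVo, hVcov, hVU, hVlf⟩ := hcp (fun n => {x | TopologicalSpace.denseSeq ℝ n ∈ Φ x})
    (fun n => isOpen_setOf_mem_of_isOpen_inter_nonempty hop hc hlsc _)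
    (eq_univ_of_forall fun x => mem_iUnion.2 <|
      (TopologicalSpace.denseRange_denseSeq ℝ).exists_mem_open (hop x) (hne x))
  exact exists_continuous_forall_mem_convex_of_locallyFinite hconv hVo hVlf hVcov _
    fun n x hx => hVU n hx

variable (H : HasOpenConvexSelection X)
include H

theorem exists_continuous_mem_Ioo {a b : X → ℝ} (ha : UpperSemicontinuous a)
    (hb : LowerSemicontinuous b) (hab : ∀ x, a x < b x) :
    ∃ f : X → ℝ, Continuous f ∧ ∀ x, f x ∈ Ioo (a x) (b x) :=
  H _ (fun x => nonempty_Ioo.2 (hab x)) (fun _ => isOpen_Ioo) (fun _ => convex_Ioo _ _)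
    fun W _ => isOpen_setOf_Ioo_inter_nonempty ha hb W

theorem normalSpace : NormalSpace X := by
  refine ⟨fun A B hA hB hAB => ?_⟩
  obtain ⟨f, hf, hfab⟩ := H.exists_continuous_mem_Ioo
    (hA.isOpen_compl.upperSemicontinuous_indicator (y := -1) (by norm_num))
    (hB.isOpen_compl.lowerSemicontinuous_indicator (y := 1) zero_le_one) fun x => by
      by_cases hxA : x ∈ A <;> by_cases hxB : x ∈ B
      · exact absurd hxB (disjoint_left.1 hAB hxA)
      all_goals simp [hxA, hxB]
  refine SeparatedNhds.mono (s₂ := f ⁻¹' Ioi 0) (t₂ := f ⁻¹' Iio 0) ?_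
    (fun x hx => by simpa [hx] using (hfab x).1) fun x hx => by simpa [hx] using (hfab x).2
  exact SeparatedNhds.preimage (s := Ioi (0 : ℝ)) (t := Iio 0)
    ⟨_, _, isOpen_Ioi, isOpen_Iio, subset_rfl, subset_rfl, Ioi_disjoint_Iio_same⟩ hf

theorem countablyParacompact : CountablyParacompact X := by
  classical
  intro U hUo hUcov
  have hex : ∀ x, ∃ n, x ∈ U n := fun x => mem_iUnion.1 (hUcov ▸ mem_univ x)
  set c : ℕ → ℝ := fun n => 1 / (n + 1)
  have hc : Antitone c := fun _ _ h => by dsimp only [c]; gcongr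
  obtain ⟨f, hf, hfc⟩ := H.exists_continuous_mem_Ioo upperSemicontinuous_const
    (lowerSemicontinuous_comp_nat_find hUo hex hc) fun x => by positivity
  refine ⟨fun n => U n ∩ f ⁻¹' Iio (c n), fun n => (hUo n).inter (isOpen_Iio.preimage hf), ?_,
    fun n => inter_subset_left,
    (locallyFinite_preimage_Iio hf (fun x => (hfc x).1) ?_).subset fun n => inter_subset_right⟩
  · exact eq_univ_of_forall fun x => mem_iUnion.2 ⟨_, Nat.find_spec (hex x), (hfc x).2⟩
  · rw [Nat.cofinite_eq_atTop]
    exact tendsto_one_div_add_atTop_nhds_zero_nat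

end HasOpenConvexSelection

end

theorem stmt_11_general {X : Type*} [TopologicalSpace X] :
    (CountablyParacompact X ∧ NormalSpace X) ↔
    (∀ Φ : X → Set ℝ,
      (∀ x, (Φ x).Nonempty) → (∀ x, IsOpen (Φ x)) → (∀ x, Convex ℝ (Φ x)) →
      (∀ U : Set ℝ, IsOpen U → IsOpen {x : X | (Φ x ∩ U).Nonempty}) →
      ∃ f : X → ℝ, Continuous f ∧ ∀ x, f x ∈ Φ x) :=
  ⟨fun ⟨hcp, hnormal⟩ => haveI := hnormal; HasOpenConvexSelection.of_countablyParacompact hcp,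
    fun H => ⟨HasOpenConvexSelection.countablyParacompact H,
      HasOpenConvexSelection.normalSpace H⟩⟩

/-- `X` is countably paracompact and normal iff every l.s.c. set-valued map
`Φ : X → Set ℝ` with nonempty open convex values has a continuous selection. -/
theorem stmt_11 {X : Type*} [TopologicalSpace X] [T2Space X] :
    (CountablyParacompact X ∧ NormalSpace X) ↔
    (∀ Φ : X → Set ℝ,
      (∀ x, (Φ x).Nonempty) → (∀ x, IsOpen (Φ x)) → (∀ x, Convex ℝ (Φ x)) →
      (∀ U : Set ℝ, IsOpen U → IsOpen {x : X | (Φ x ∩ U).Nonempty}) →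
      ∃ f : X → ℝ, Continuous f ∧ ∀ x, f x ∈ Φ x) :=
  stmt_11_general
end

section
/- Let X be a metrizable topological space, A ⊆ X a closed subset, E a locally convex real topological vector space, and Φ ⊆ X × E an open relation with nonempty convex fibers. Then every continuous map g : A → E with g(a) ∈ Φ(a) for all a ∈ A extends to a continuous map f : X → E with f(x) ∈ Φ(x) for all x ∈ X. -/
/-!
By Dugundji's theorem `g` has a continuous extension `G : X → E`: on `X \ A` take a partition of
unity subordinate to the balls `B(z, d(z, A) / 2)` and average the values of `g` at points of `A`
within `2 d(z, A)` of the centres; a convex neighbourhood of `g x` then contains `G y` for all `y` near `x ∈ A`.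
Since `Φ` is open, `G` is a selection of `Φ` on an open set `V ⊇ A`. Since the fibres are convex
and `Φ` is open, partitions of unity also give a global continuous selection `h`. With a Urysohn
function `φ` equal to `1` on `A` and to `0` off `V`, the map `φ • G + (1 - φ) • h` is a selection
by convexity of the fibres, and it extends `g`.
-/

open Set Filter Topology Metric

section ContinuousSelection

variable {E : Type*} [AddCommGroup E] [Module ℝ E]

open Classical in
noncomputable def dugundjiExtension {X : Type*} [TopologicalSpace X] {A : Set X} (g : A → E)
    (p : PartitionOfUnity (↥Aᶜ) (↥Aᶜ)) (b : ↥Aᶜ → A) (x : X) : E :=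
  if hx : x ∈ A then g ⟨x, hx⟩ else ∑ᶠ i, p i ⟨x, hx⟩ • g (b i)

theorem dugundjiExtension_of_mem {X : Type*} [TopologicalSpace X] {A : Set X} {g : A → E}
    {p : PartitionOfUnity (↥Aᶜ) (↥Aᶜ)} {b : ↥Aᶜ → A} {x : X} (hx : x ∈ A) :
    dugundjiExtension g p b x = g ⟨x, hx⟩ :=
  dif_pos hx

variable [TopologicalSpace E]

section DugundjiExtension

variable {X : Type*} {A : Set X} {g : A → E} {x : X}

theorem continuousOn_dugundjiExtension [TopologicalSpace X] [ContinuousAdd E]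
    [ContinuousSMul ℝ E] (p : PartitionOfUnity (↥Aᶜ) (↥Aᶜ)) (b : ↥Aᶜ → A) :
    ContinuousOn (dugundjiExtension g p b) Aᶜ := by
  rw [continuousOn_iff_continuous_domRestrict]
  have hrestrict : Aᶜ.domRestrict (dugundjiExtension g p b) = fun z => ∑ᶠ i, p i z • g (b i) :=
    funext fun z => dif_neg z.2
  rw [hrestrict]
  exact p.continuous_finsum_smul fun i _ _ => continuousAt_const

theorem exists_partitionOfUnity_dist_lt [PseudoMetricSpace X] (hA : IsClosed A)
    (hAne : A.Nonempty) :
    ∃ (p : PartitionOfUnity (↥Aᶜ) (↥Aᶜ)) (b : ↥Aᶜ → A),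
      ∀ i z, z ∈ tsupport (p i) → ∀ x ∈ A, dist (b i : X) x < 6 * dist (z : X) x := by
  set r : ↥Aᶜ → ℝ := fun i => infDist (i : X) A
  have hr : ∀ i, 0 < r i := fun i => (hA.notMem_iff_infDist_pos hAne).1 i.2
  set B : ↥Aᶜ → Set ↥Aᶜ := fun i => {z | dist (z : X) i < r i / 2}
  have hBo : ∀ i, IsOpen (B i) := fun i =>
    isOpen_lt (continuous_subtype_val.dist continuous_const) continuous_const
  have hBcover : univ ⊆ ⋃ i, B i := fun z _ =>
    mem_iUnion.2 ⟨z, by simpa [B, dist_self] using half_pos (hr z)⟩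
  obtain ⟨p, hp⟩ := PartitionOfUnity.exists_isSubordinate isClosed_univ B hBo hBcover
  have hnear : ∀ i : ↥Aᶜ, ∃ y ∈ A, dist (i : X) y < 2 * r i := fun i =>
    (infDist_lt_iff hAne).1 (by linarith [hr i])
  choose b hbA hb using hnear
  refine ⟨p, fun i => ⟨b i, hbA i⟩, fun i z hz x hx => ?_⟩
  have hzi : dist (z : X) i < r i / 2 := hp i hz
  have hrx : r i ≤ dist (i : X) x := infDist_le_dist_of_mem hx
  have hix := dist_triangle_left (i : X) x z
  have hbx := dist_triangle4 (b i) (i : X) z x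
  rw [dist_comm (b i) (i : X), dist_comm (i : X) z] at hbx
  show dist (b i) x < 6 * dist (z : X) x
  linarith [hb i]

theorem continuousAt_dugundjiExtension [PseudoMetricSpace X] [LocallyConvexSpace ℝ E]
    {p : PartitionOfUnity (↥Aᶜ) (↥Aᶜ)} {b : ↥Aᶜ → A} (hg : Continuous g)
    (hpb : ∀ i z, z ∈ tsupport (p i) → ∀ x ∈ A, dist (b i : X) x < 6 * dist (z : X) x)
    (hx : x ∈ A) : ContinuousAt (dugundjiExtension g p b) x := by
  rw [ContinuousAt, dugundjiExtension_of_mem hx]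
  refine (LocallyConvexSpace.convex_basis (𝕜 := ℝ) _).tendsto_right_iff.2
    fun W ⟨hW, hWconv⟩ => ?_
  obtain ⟨ε, hε, hball⟩ := Metric.mem_nhds_iff.1 (hg.continuousAt.preimage_mem_nhds hW)
  filter_upwards [ball_mem_nhds x (by positivity : (0 : ℝ) < ε / 6)] with y hy
  rw [mem_ball] at hy
  by_cases hyA : y ∈ A
  · rw [dugundjiExtension_of_mem hyA]
    exact hball (by rw [mem_ball, Subtype.dist_eq]; linarith)
  · rw [dugundjiExtension, dif_neg hyA]
    refine p.finsum_smul_mem_convex (g := fun i _ => g (b i)) (mem_univ _)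
      (fun i hi => hball ?_) hWconv
    rw [mem_ball, Subtype.dist_eq]
    linarith [hpb i _ (subset_tsupport _ hi) x hx]

end DugundjiExtension

theorem exists_continuous_extension_of_isClosed {X : Type*} [TopologicalSpace X]
    [TopologicalSpace.PseudoMetrizableSpace X] [ContinuousAdd E] [ContinuousSMul ℝ E]
    [LocallyConvexSpace ℝ E] {A : Set X} (hA : IsClosed A) {g : A → E} (hg : Continuous g) :
    ∃ G : X → E, Continuous G ∧ ∀ a : A, G a = g a := by
  let := TopologicalSpace.pseudoMetrizableSpacePseudoMetric X
  rcases A.eq_empty_or_nonempty with rfl | hAne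
  · exact ⟨0, continuous_const, fun a => absurd a.2 (notMem_empty _)⟩
  obtain ⟨p, b, hpb⟩ := exists_partitionOfUnity_dist_lt hA hAne
  refine ⟨dugundjiExtension g p b, continuous_iff_continuousAt.2 fun x => ?_,
    fun a => dugundjiExtension_of_mem a.2⟩
  by_cases hx : x ∈ A
  · exact continuousAt_dugundjiExtension hg hpb hx
  · exact (continuousOn_dugundjiExtension p b).continuousAt (hA.isOpen_compl.mem_nhds hx)

section Selection

variable {X : Type*} [TopologicalSpace X] [NormalSpace X] [ContinuousAdd E] [ContinuousSMul ℝ E]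
  {Φ : Set (X × E)}

theorem exists_continuous_selection_of_isOpen [ParacompactSpace X] (hΦ : IsOpen Φ)
    (hne : ∀ x, {y | (x, y) ∈ Φ}.Nonempty) (hconv : ∀ x, Convex ℝ {y | (x, y) ∈ Φ}) :
    ∃ h : C(X, E), ∀ x, (x, h x) ∈ Φ := by
  refine exists_continuous_forall_mem_convex_of_local_const hconv fun x => ?_
  obtain ⟨y, hy⟩ := hne x
  exact ⟨y, (continuous_id.prodMk continuous_const).continuousAt.eventually_mem (hΦ.mem_nhds hy)⟩

theorem exists_continuous_selection_eqOn {A : Set X} (hA : IsClosed A) (hΦ : IsOpen Φ)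
    (hconv : ∀ x, Convex ℝ {y | (x, y) ∈ Φ}) {G h : X → E} (hG : Continuous G)
    (hh : Continuous h) (hGΦ : ∀ a ∈ A, (a, G a) ∈ Φ) (hhΦ : ∀ x, (x, h x) ∈ Φ) :
    ∃ f : X → E, Continuous f ∧ EqOn f G A ∧ ∀ x, (x, f x) ∈ Φ := by
  set V := {x | (x, G x) ∈ Φ}
  have hV : IsOpen V := hΦ.preimage (continuous_id.prodMk hG)
  obtain ⟨φ, hφ0, hφ1, hφ01⟩ := exists_continuous_zero_one_of_isClosed hV.isClosed_compl hA
    (disjoint_compl_left.mono_right hGΦ)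
  refine ⟨fun x => φ x • G x + (1 - φ x) • h x, by fun_prop, fun a ha => by simp [hφ1 ha],
    fun x => ?_⟩
  by_cases hxV : x ∈ V
  · exact hconv x hxV (hhΦ x) (hφ01 x).1 (sub_nonneg.2 (hφ01 x).2) (add_sub_cancel _ _)
  · simpa [hφ0 hxV] using hhΦ x

end Selection

end ContinuousSelection

theorem stmt_13_general {X E : Type*} [TopologicalSpace X]
    [TopologicalSpace.MetrizableSpace X]
    [AddCommGroup E] [Module ℝ E] [TopologicalSpace E]
    [IsTopologicalAddGroup E] [ContinuousSMul ℝ E] [LocallyConvexSpace ℝ E]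
    (A : Set X) (hA : IsClosed A)
    (Φ : Set (X × E)) (hΦ : IsOpen Φ)
    (hfib : ∀ x : X, {y : E | (x, y) ∈ Φ}.Nonempty ∧ Convex ℝ {y : E | (x, y) ∈ Φ})
    (g : A → E) (hg : Continuous g) (hsel : ∀ a : A, ((a : X), g a) ∈ Φ) :
    ∃ f : X → E, Continuous f ∧ (∀ a : A, f a = g a) ∧ ∀ x : X, (x, f x) ∈ Φ := by
  let := TopologicalSpace.metrizableSpaceMetric X
  obtain ⟨G, hG, hGg⟩ := exists_continuous_extension_of_isClosed hA hg
  obtain ⟨h, hh⟩ := exists_continuous_selection_of_isOpen hΦ (fun x => (hfib x).1)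
    fun x => (hfib x).2
  have hGΦ : ∀ a ∈ A, (a, G a) ∈ Φ := fun a ha => hGg ⟨a, ha⟩ ▸ hsel ⟨a, ha⟩
  obtain ⟨f, hf, hfG, hfΦ⟩ := exists_continuous_selection_eqOn hA hΦ (fun x => (hfib x).2) hG
    h.continuous hGΦ hh
  exact ⟨f, hf, fun a => (hfG a.2).trans (hGg a), hfΦ⟩

/-- Over a metrizable domain, every continuous partial selection on a closed set
for a convex-valued open relation into a locally convex space extends to a
continuous selection. -/
theorem stmt_13 {X E : Type*} [TopologicalSpace X] [T2Space X]
    [TopologicalSpace.MetrizableSpace X]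
    [AddCommGroup E] [Module ℝ E] [TopologicalSpace E] [T2Space E]
    [IsTopologicalAddGroup E] [ContinuousSMul ℝ E] [LocallyConvexSpace ℝ E]
    (A : Set X) (hA : IsClosed A)
    (Φ : Set (X × E)) (hΦ : IsOpen Φ)
    (hfib : ∀ x : X, {y : E | (x, y) ∈ Φ}.Nonempty ∧ Convex ℝ {y : E | (x, y) ∈ Φ})
    (g : A → E) (hg : Continuous g) (hsel : ∀ a : A, ((a : X), g a) ∈ Φ) :
    ∃ f : X → E, Continuous f ∧ (∀ a : A, f a = g a) ∧ ∀ x : X, (x, f x) ∈ Φ :=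
  stmt_13_general A hA Φ hΦ hfib g hg hsel
end

section
/- Let λ be an infinite ordinal equipped with its order topology, X a topological space, and suppose Ω ⊆ X × λ is a relation whose fibers Ω(x) ⊆ λ are nonempty sets of isolated points of λ, which is increasing (α ∈ Ω(x), α ≤ β isolated implies β ∈ Ω(x); equivalently Ω⁻¹(α) ⊆ Ω⁻¹(β) for α < β), and such that each Ω⁻¹(α) = {x : α ∈ Ω(x)} is open in X and ⋃_α Ω⁻¹(α) = X. Then the pointwise closure relation Ω̄, defined by Ω̄(x) = closure of Ω(x) in λ, is an open subset of X × λ and is increasing. -/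
/-!
Successor points of a well-order are isolated, and every non-isolated `β > α` is a limit of
successors `succ γ` with `α ≤ γ < β`. Hence a set that contains every isolated point above its
minimum has closure `Ici (min Ω x)`, and the relation is `{(x, β) | min Ω x ≤ β}`. It is open
because `α := min Ω x` is isolated, so `Ω⁻¹(α) ×ˢ Ici α` is an open neighbourhood inside it.
-/

open Set Order

section WellOrderedSpace

variable {L : Type*} [LinearOrder L] [TopologicalSpace L] [OrderTopology L] {S : Set L} {α : L}

theorem Ici_subset_closure_of_isolated_upward [WellFoundedLT L] (hα : α ∈ S)
    (hS : ∀ β, α ≤ β → IsOpen ({β} : Set L) → β ∈ S) : Ici α ⊆ closure S := by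
  let := SuccOrder.ofLinearWellFoundedLT L
  intro β hαβ
  rcases (mem_Ici.mp hαβ).eq_or_lt with rfl | hlt
  · exact subset_closure hα
  by_cases hβ : IsOpen ({β} : Set L)
  · exact subset_closure (hS β hαβ hβ)
  have hlim : IsSuccPrelimit β :=
    by_contra fun h ↦ hβ (SuccOrder.isOpen_singleton_of_not_isSuccPrelimit h)
  refine mem_closure_iff_nhds.mpr fun U hU ↦ ?_
  obtain ⟨γ, hγβ, hγU⟩ := exists_Ioc_subset_of_mem_nhds hU ⟨α, hlt⟩
  have hmax : max γ α < β := max_lt hγβ hlt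
  have hsucc : IsOpen ({succ (max γ α)} : Set L) :=
    SuccOrder.isOpen_singleton_of_not_isSuccPrelimit fun h ↦ not_isMax_of_lt hmax h.isMax
  refine ⟨succ (max γ α), hγU ⟨?_, (hlim.succ_lt hmax).le⟩,
    hS _ ((le_max_right γ α).trans (le_succ _)) hsucc⟩
  exact (le_max_left γ α).trans_lt (lt_succ_of_not_isMax (not_isMax_of_lt hmax))

theorem closure_eq_Ici_of_isolated_upward [WellFoundedLT L] (hα : IsLeast S α)
    (hS : ∀ β, α ≤ β → IsOpen ({β} : Set L) → β ∈ S) : closure S = Ici α :=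
  (closure_minimal hα.2 isClosed_Ici).antisymm (Ici_subset_closure_of_isolated_upward hα.1 hS)

theorem isOpen_Ici_of_isOpen_singleton (h : IsOpen ({α} : Set L)) : IsOpen (Ici α) :=
  Ioi_insert (a := α) ▸ h.union isOpen_Ioi

end WellOrderedSpace

theorem stmt_15_general {X L : Type*} [TopologicalSpace X]
    [LinearOrder L] [TopologicalSpace L] [OrderTopology L] [WellFoundedLT L]
    (Ω : X → Set L)
    (hne : ∀ x, (Ω x).Nonempty)
    (hiso : ∀ x : X, ∀ α ∈ Ω x, IsOpen ({α} : Set L))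
    (hinc : ∀ x : X, ∀ α ∈ Ω x, ∀ β : L, α ≤ β → IsOpen ({β} : Set L) → β ∈ Ω x)
    (hop : ∀ α : L, IsOpen {x : X | α ∈ Ω x}) :
    IsOpen {p : X × L | p.2 ∈ closure (Ω p.1)} ∧
      ∀ x : X, ∀ α ∈ closure (Ω x), ∀ β : L, α ≤ β → β ∈ closure (Ω x) := by
  set m : X → L := fun x ↦ wellFounded_lt.min (Ω x) (hne x)
  have hm : ∀ x, IsLeast (Ω x) (m x) := fun x ↦
    ⟨wellFounded_lt.min_mem _ _, fun _ hβ ↦ wellFounded_lt.min_le hβ⟩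
  have hcl : ∀ x, closure (Ω x) = Ici (m x) := fun x ↦
    closure_eq_Ici_of_isolated_upward (hm x) (hinc x _ (hm x).1)
  simp only [hcl, mem_Ici]
  refine ⟨isOpen_iff_forall_mem_open.mpr fun ⟨x, β⟩ hxβ ↦ ?_,
    fun x α hα β hαβ ↦ hα.trans hαβ⟩
  refine ⟨{y | m x ∈ Ω y} ×ˢ Ici (m x), ?_,
    (hop _).prod (isOpen_Ici_of_isOpen_singleton (hiso x _ (hm x).1)), (hm x).1, hxβ⟩
  rintro ⟨y, γ⟩ ⟨hy, hγ⟩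
  exact ((hm y).2 hy).trans hγ

/-- For an increasing open cover `Ω` of `X` indexed by the isolated points of an
infinite ordinal (modelled as an infinite well-ordered set `L` with its order
topology), the pointwise closure relation is an increasing open relation. -/
theorem stmt_15 {X L : Type*} [TopologicalSpace X]
    [LinearOrder L] [TopologicalSpace L] [OrderTopology L] [WellFoundedLT L] [Infinite L]
    (Ω : X → Set L)
    (hne : ∀ x, (Ω x).Nonempty)
    (hiso : ∀ x : X, ∀ α ∈ Ω x, IsOpen ({α} : Set L))
    (hinc : ∀ x : X, ∀ α ∈ Ω x, ∀ β : L, α ≤ β → IsOpen ({β} : Set L) → β ∈ Ω x)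
    (hop : ∀ α : L, IsOpen {x : X | α ∈ Ω x}) :
    IsOpen {p : X × L | p.2 ∈ closure (Ω p.1)} ∧
      ∀ x : X, ∀ α ∈ closure (Ω x), ∀ β : L, α ≤ β → β ∈ closure (Ω x) :=
  stmt_15_general Ω hne hiso hinc hop
end

section
/- Let X be a τ-paracompact normal topological space and Y a compact Hausdorff space of topological weight at most τ. Then the product X × Y is normal. -/
/-!
For disjoint closed `F, G ⊆ X × Y` and a point `x`, compactness of `Y` gives a finite union `O` of
basic open sets with the `G`-fiber of `x` inside `O` and the `F`-fiber of `x` disjoint from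
`closure O`; by the tube lemma this persists on an open neighbourhood of `x`. There are at most
`τ` such `O`, so these neighbourhoods form an open cover of `X` of size at most `τ`, which has a
locally finite open refinement `v` with `closure (v k)` inside the neighbourhood chosen for `O k`.
Then `⋃ k, v k ×ˢ O k` is an open neighbourhood of `G` whose closure, by local finiteness, is
`⋃ k, closure (v k) ×ˢ closure (O k)` and misses `F`.
-/

universe u

/-- A space is `τ`-paracompact if every open cover of cardinality at most `τ`
has a locally finite open refinement. -/
def TauParacompact (X : Type u) [TopologicalSpace X] (τ : Cardinal.{u}) : Prop :=
  ∀ 𝒰 : Set (Set X), (∀ U ∈ 𝒰, IsOpen U) → ⋃₀ 𝒰 = Set.univ → Cardinal.mk 𝒰 ≤ τ →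
    ∃ 𝒱 : Set (Set X), (∀ V ∈ 𝒱, IsOpen V) ∧ ⋃₀ 𝒱 = Set.univ ∧
      (∀ V ∈ 𝒱, ∃ U ∈ 𝒰, V ⊆ U) ∧
      ∀ x : X, ∃ N ∈ nhds x, {V ∈ 𝒱 | (V ∩ N).Nonempty}.Finite

open Set TopologicalSpace
open scoped Cardinal

lemma Cardinal.mk_finset_le {α : Type u} {τ : Cardinal.{u}} (hτ : ℵ₀ ≤ τ) (hα : #α ≤ τ) :
    #(Finset α) ≤ τ := by
  rcases finite_or_infinite α with _ | _
  · exact Cardinal.mk_le_aleph0.trans hτ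
  · rwa [Cardinal.mk_finset_of_infinite]

lemma TauParacompact.exists_locallyFinite_refinement {X : Type u} [TopologicalSpace X]
    {τ : Cardinal.{u}} (hX : TauParacompact X τ) {ι : Type u} (u : ι → Set X)
    (hu : ∀ i, IsOpen (u i)) (hcover : ⋃ i, u i = univ) (hι : #ι ≤ τ) :
    ∃ (κ : Type u) (v : κ → Set X) (j : κ → ι), (∀ k, IsOpen (v k)) ∧ LocallyFinite v ∧
      ⋃ k, v k = univ ∧ ∀ k, v k ⊆ u (j k) := by
  obtain ⟨𝒱, h𝒱o, h𝒱cover, h𝒱ref, h𝒱lf⟩ :=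
    hX (range u) (forall_mem_range.2 hu) (sUnion_range u ▸ hcover)
      (Cardinal.mk_range_le.trans hι)
  choose U hU𝒰 hVU using fun V : 𝒱 => h𝒱ref V V.2
  choose i hi using hU𝒰
  refine ⟨𝒱, (↑), i, fun V => h𝒱o V V.2, fun x => ?_, sUnion_eq_iUnion ▸ h𝒱cover,
    fun V => hi V ▸ hVU V⟩
  obtain ⟨N, hN, hfin⟩ := h𝒱lf x
  refine ⟨N, hN, (hfin.preimage Subtype.val_injective.injOn).subset ?_⟩
  exact fun V hV => ⟨V.2, hV⟩

lemma TauParacompact.exists_locallyFinite_closure_subset {X : Type u} [TopologicalSpace X]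
    [NormalSpace X] {τ : Cardinal.{u}} (hX : TauParacompact X τ) {ι : Type u} (u : ι → Set X)
    (hu : ∀ i, IsOpen (u i)) (hcover : ⋃ i, u i = univ) (hι : #ι ≤ τ) :
    ∃ (κ : Type u) (v : κ → Set X) (j : κ → ι), (∀ k, IsOpen (v k)) ∧ LocallyFinite v ∧
      ⋃ k, v k = univ ∧ ∀ k, closure (v k) ⊆ u (j k) := by
  obtain ⟨κ, w, j, hwo, hwlf, hwcover, hwu⟩ :=
    hX.exists_locallyFinite_refinement u hu hcover hι
  obtain ⟨v, hvcover, hvo, hvw⟩ := exists_iUnion_eq_closure_subset hwo hwlf.point_finite hwcover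
  exact ⟨κ, v, j, hvo, hwlf.subset fun k => subset_closure.trans (hvw k), hvcover,
    fun k => (hvw k).trans (hwu k)⟩

lemma TopologicalSpace.IsTopologicalBasis.exists_finset_subset_closure_subset
    {Y : Type*} [TopologicalSpace Y] [RegularSpace Y] {B : Set (Set Y)}
    (hB : IsTopologicalBasis B) {K U : Set Y} (hK : IsCompact K) (hU : IsOpen U) (hKU : K ⊆ U) :
    ∃ s : Finset B, K ⊆ ⋃ b ∈ s, (b : Set Y) ∧ closure (⋃ b ∈ s, (b : Set Y)) ⊆ U := by
  classical
  obtain ⟨t, ht⟩ := hK.elim_finite_subcover (fun b : {b : B // closure (b : Set Y) ⊆ U} => b.1.1)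
    (fun b => hB.isOpen b.1.2) fun y hy => by
      obtain ⟨b, hbB, hyb, hbU⟩ := hB.exists_closure_subset (hU.mem_nhds (hKU hy))
      exact mem_iUnion.2 ⟨⟨⟨b, hbB⟩, hbU⟩, hyb⟩
  refine ⟨t.image Subtype.val, by rwa [Finset.set_biUnion_finset_image], ?_⟩
  rw [Finset.closure_biUnion, Finset.set_biUnion_finset_image]
  exact iUnion₂_subset fun b _ => b.2

section Product

variable {X Y : Type*} [TopologicalSpace X] [TopologicalSpace Y]

lemma isOpen_setOf_disjoint_preimage_prodMk {C : Set (X × Y)} (hC : IsClosed C) {K : Set Y}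
    (hK : IsCompact K) : IsOpen {x | Disjoint (Prod.mk x ⁻¹' C) K} := by
  refine isOpen_iff_forall_mem_open.2 fun x hx => ?_
  have hxK : ({x} : Set X) ×ˢ K ⊆ Cᶜ := by
    rintro ⟨a, y⟩ ⟨rfl, hy⟩ hC
    exact hx.notMem_of_mem_right hy hC
  obtain ⟨V, W, hV, -, hxV, hKW, hVW⟩ :=
    generalized_tube_lemma isCompact_singleton hK hC.isOpen_compl hxK
  exact ⟨V, fun a ha => disjoint_left.2 fun y hy hyK => hVW ⟨ha, hKW hyK⟩ hy, hV, hxV rfl⟩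

def fiberSeparated (F G : Set (X × Y)) (O : Set Y) : Set X :=
  {x | Disjoint (Prod.mk x ⁻¹' F) (closure O) ∧ Prod.mk x ⁻¹' G ⊆ O}

lemma isOpen_fiberSeparated [CompactSpace Y] {F G : Set (X × Y)} (hF : IsClosed F)
    (hG : IsClosed G) {O : Set Y} (hO : IsOpen O) : IsOpen (fiberSeparated F G O) := by
  simp only [fiberSeparated, ofPred_and, ← disjoint_compl_right_iff_subset]
  exact (isOpen_setOf_disjoint_preimage_prodMk hF isClosed_closure.isCompact).inter
    (isOpen_setOf_disjoint_preimage_prodMk hG hO.isClosed_compl.isCompact)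

lemma exists_finset_mem_fiberSeparated [CompactSpace Y] [RegularSpace Y] {B : Set (Set Y)}
    (hB : IsTopologicalBasis B) {F G : Set (X × Y)} (hF : IsClosed F) (hG : IsClosed G)
    (hFG : Disjoint F G) (x : X) :
    ∃ s : Finset B, x ∈ fiberSeparated F G (⋃ b ∈ s, (b : Set Y)) := by
  have hFx : IsClosed (Prod.mk x ⁻¹' F) := hF.preimage (Continuous.prodMk_right x)
  have hGx : IsCompact (Prod.mk x ⁻¹' G) :=
    (hG.preimage (Continuous.prodMk_right x)).isCompact
  obtain ⟨s, hGs, hsF⟩ := hB.exists_finset_subset_closure_subset hGx hFx.isOpen_compl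
    (subset_compl_iff_disjoint_left.2 (hFG.preimage _))
  exact ⟨s, subset_compl_iff_disjoint_left.1 hsF, hGs⟩

lemma separatedNhds_of_locallyFinite {ι : Type*} {F G : Set (X × Y)} {v : ι → Set X}
    {O : ι → Set Y} (hv : ∀ i, IsOpen (v i)) (hvlf : LocallyFinite v) (hvcover : ⋃ i, v i = univ)
    (hO : ∀ i, IsOpen (O i)) (hG : ∀ i, ∀ x ∈ v i, Prod.mk x ⁻¹' G ⊆ O i)
    (hF : ∀ i, ∀ x ∈ closure (v i), Disjoint (Prod.mk x ⁻¹' F) (closure (O i))) :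
    SeparatedNhds F G := by
  set U := ⋃ i, v i ×ˢ O i
  have hGU : G ⊆ U := by
    rintro ⟨x, y⟩ hxy
    obtain ⟨i, hi⟩ := mem_iUnion.1 (hvcover ▸ mem_univ x)
    exact mem_iUnion.2 ⟨i, hi, hG i x hi hxy⟩
  have hclosureU : closure U = ⋃ i, closure (v i) ×ˢ closure (O i) := by
    simp only [U, (hvlf.prod_right O).closure_iUnion, closure_prod_eq]
  have hFU : F ⊆ (closure U)ᶜ := by
    rintro ⟨x, y⟩ hxy hxyU
    rw [hclosureU] at hxyU
    obtain ⟨i, hx, hy⟩ := mem_iUnion.1 hxyU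
    exact (hF i x hx).notMem_of_mem_left hxy hy
  exact ⟨(closure U)ᶜ, U, isClosed_closure.isOpen_compl,
    isOpen_iUnion fun i => (hv i).prod (hO i), hFU, hGU,
    disjoint_compl_left.mono_right subset_closure⟩

end Product

theorem stmt_16_general {X Y : Type u} [TopologicalSpace X] [NormalSpace X]
    [TopologicalSpace Y] [T2Space Y] [CompactSpace Y]
    (τ : Cardinal.{u}) (hτ : Cardinal.aleph0 ≤ τ)
    (hX : TauParacompact X τ)
    (hw : ∃ B : Set (Set Y), TopologicalSpace.IsTopologicalBasis B ∧ Cardinal.mk B ≤ τ) :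
    NormalSpace (X × Y) := by
  obtain ⟨B, hB, hBτ⟩ := hw
  refine ⟨fun F G hF hG hFG => ?_⟩
  let O : Finset B → Set Y := fun s => ⋃ b ∈ s, (b : Set Y)
  have hO : ∀ s, IsOpen (O s) := fun s => isOpen_biUnion fun b _ => hB.isOpen b.2
  obtain ⟨κ, v, j, hvo, hvlf, hvcover, hvj⟩ := hX.exists_locallyFinite_closure_subset
    (fun s => fiberSeparated F G (O s)) (fun s => isOpen_fiberSeparated hF hG (hO s))
    (iUnion_eq_univ_iff.2 (exists_finset_mem_fiberSeparated hB hF hG hFG))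
    (Cardinal.mk_finset_le hτ hBτ)
  exact separatedNhds_of_locallyFinite hvo hvlf hvcover (fun k => hO (j k))
    (fun k x hx => (hvj k (subset_closure hx)).2) fun k x hx => (hvj k hx).1

/-- Morita: the product of a `τ`-paracompact normal space with a compact Hausdorff
space of weight at most `τ` is normal. -/
theorem stmt_16 {X Y : Type u} [TopologicalSpace X] [T2Space X] [NormalSpace X]
    [TopologicalSpace Y] [T2Space Y] [CompactSpace Y]
    (τ : Cardinal.{u}) (hτ : Cardinal.aleph0 ≤ τ)
    (hX : TauParacompact X τ)
    (hw : ∃ B : Set (Set Y), TopologicalSpace.IsTopologicalBasis B ∧ Cardinal.mk B ≤ τ) :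
    NormalSpace (X × Y) :=
  stmt_16_general τ hτ hX hw
end

section
/- Let τ be an infinite cardinal (viewed as an ordinal with the order topology) and X a topological space such that the product X × (τ+1) is normal, where τ+1 carries the order topology. Then X is τ-paracompact: every open cover of X of cardinality at most τ has a locally finite open refinement. -/
universe u

/-!
By induction on `τ`, with finite `τ` trivial. For infinite `τ` put `δ = τ.ord`, a limit ordinal,
and rank the members of the cover below `δ`; the unions `W α` of the members of rank `≤ α` form
an increasing open cover. Urysohn's lemma in `X × [0, δ]` gives `F` equal to `1` on `X × {δ}`
and to `0` at `(x, γ)` whenever `x ∉ W γ`. The set of `x` with `F (x, ·) > t` on the whole tail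
`[α, δ]` is open by the tube lemma and lies in `W α`; for rationals `p < q`, the part of the
`q`-level at `α` away from the closure of the `p`-levels below `α` is a locally finite family in
`α`, and these countably many families cover `X`. Normality of `X × [0, ω]`, i.e. countable
paracompactness, makes this σ-locally finite refinement locally finite. Each of its members lies
in `W α` for some `α < δ`, a union of fewer than `τ` members, so the induction hypothesis refines
it further into members of the cover.
-/

open Set Topology Filter Order
open scoped Cardinal

instance (δ : Ordinal) : CompactSpace (Iic δ) :=
  isCompact_iff_compactSpace.mp (Icc_bot (a := δ) ▸ isCompact_Icc)

theorem not_strictMonoOn_rat_Ioo {α : Type*} [LinearOrder α] [WellFoundedLT α] (f : ℚ → α) :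
    ¬ StrictMonoOn f (Ioo 0 1) := by
  intro hf
  obtain ⟨_, ⟨q, hq, rfl⟩, hmin⟩ :=
    wellFounded_lt.has_min (f '' Ioo 0 1) ⟨f (1 / 2), 1 / 2, by norm_num, rfl⟩
  have hq2 : q / 2 ∈ Ioo (0 : ℚ) 1 := ⟨by linarith [hq.1], by linarith [hq.1, hq.2]⟩
  exact hmin _ ⟨q / 2, hq2, rfl⟩ (hf hq2 hq (by linarith [hq.1]))

section General

variable {X : Type*} [TopologicalSpace X]

theorem normalSpace_prod_Iic_of_le {δ₁ δ₂ : Ordinal} (h : δ₁ ≤ δ₂) [NormalSpace (X × Iic δ₂)] :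
    NormalSpace (X × Iic δ₁) :=
  (IsClosedEmbedding.id.prodMap <| .inclusion (Iic_subset_Iic.mpr h)
    (isClosed_Iic.preimage continuous_subtype_val)).normalSpace

theorem normalSpace_of_normalSpace_prod {Y : Type*} [TopologicalSpace Y] [T1Space Y] (y : Y)
    [NormalSpace (X × Y)] : NormalSpace X :=
  IsClosedEmbedding.normalSpace (f := fun x : X => (x, y))
    ⟨isEmbedding_prodMkLeft y, by
      rw [← image_univ, ← prod_singleton]; exact isClosed_univ.prod isClosed_singleton⟩

theorem LocallyFinite.sigma_inter {ι : Type*} {κ : ι → Type*} {f : ι → Set X}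
    {g : (i : ι) → κ i → Set X} (hf : LocallyFinite f) (hg : ∀ i, LocallyFinite (g i)) :
    LocallyFinite fun p : (Σ i, κ i) => f p.1 ∩ g p.1 p.2 := by
  intro x
  obtain ⟨N, hN, hfin⟩ := hf x
  choose M hM hMfin using fun i => hg i x
  refine ⟨N ∩ ⋂ i ∈ {i | (f i ∩ N).Nonempty}, M i,
    inter_mem hN ((biInter_mem hfin).2 fun i _ => hM i),
    (hfin.biUnion fun i _ => (hMfin i).image (Sigma.mk i)).subset ?_⟩
  rintro ⟨i, j⟩ ⟨y, ⟨hyf, hyg⟩, hyN, hyM⟩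
  have hi : (f i ∩ N).Nonempty := ⟨y, hyf, hyN⟩
  exact mem_biUnion hi ⟨j, ⟨y, hyg, mem_iInter₂.1 hyM i hi⟩, rfl⟩

/-- Stated as in `TauParacompact`, which thus unfolds to
`∀ 𝒰, … → HasLocallyFiniteOpenRefinement 𝒰`. -/
def HasLocallyFiniteOpenRefinement (𝒰 : Set (Set X)) : Prop :=
  ∃ 𝒱 : Set (Set X), (∀ V ∈ 𝒱, IsOpen V) ∧ ⋃₀ 𝒱 = univ ∧ (∀ V ∈ 𝒱, ∃ U ∈ 𝒰, V ⊆ U) ∧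
    ∀ x, ∃ N ∈ 𝓝 x, {V ∈ 𝒱 | (V ∩ N).Nonempty}.Finite

theorem HasLocallyFiniteOpenRefinement.of_locallyFinite {𝒰 : Set (Set X)} {ι : Type*}
    {V : ι → Set X} (hVo : ∀ i, IsOpen (V i)) (hVcov : ⋃ i, V i = univ)
    (hV𝒰 : ∀ i, (V i).Nonempty → ∃ U ∈ 𝒰, V i ⊆ U) (hVlf : LocallyFinite V) :
    HasLocallyFiniteOpenRefinement 𝒰 := by
  refine ⟨{S | S.Nonempty ∧ ∃ i, V i = S}, ?_, eq_univ_of_forall fun x => ?_, ?_, fun x => ?_⟩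
  · rintro _ ⟨-, i, rfl⟩
    exact hVo i
  · obtain ⟨i, hi⟩ := mem_iUnion.1 (hVcov.symm ▸ mem_univ x)
    exact ⟨V i, ⟨⟨x, hi⟩, i, rfl⟩, hi⟩
  · rintro _ ⟨hne, i, rfl⟩
    exact hV𝒰 i hne
  · obtain ⟨N, hN, hfin⟩ := hVlf x
    refine ⟨N, hN, (hfin.image V).subset ?_⟩
    rintro _ ⟨⟨-, i, rfl⟩, h⟩
    exact ⟨i, h, rfl⟩

theorem locallyFinite_subtype_val {𝒱 : Set (Set X)}
    (h : ∀ x, ∃ N ∈ 𝓝 x, {V ∈ 𝒱 | (V ∩ N).Nonempty}.Finite) :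
    LocallyFinite ((↑) : 𝒱 → Set X) := fun x => by
  obtain ⟨N, hN, hfin⟩ := h x
  exact ⟨N, hN, (hfin.preimage Subtype.val_injective.injOn).subset fun V hV => ⟨V.2, hV⟩⟩

end General

section Tail

variable {X : Type*} {δ : Ordinal} {F : X × Iic δ → ℝ} {p q s t : ℝ} {α β : Ordinal} {x : X}

def tailSuperlevel (F : X × Iic δ → ℝ) (t : ℝ) (α : Ordinal) : Set X :=
  {x | ∀ γ : Iic δ, α ≤ γ → t < F (x, γ)}

theorem tailSuperlevel_mono (h : α ≤ β) : tailSuperlevel F t α ⊆ tailSuperlevel F t β :=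
  fun _ hx γ hγ => hx γ (h.trans hγ)

theorem tailSuperlevel_anti (h : s ≤ t) : tailSuperlevel F t α ⊆ tailSuperlevel F s α :=
  fun _ hx γ hγ => h.trans_lt (hx γ hγ)

theorem mem_tailSuperlevel_add_one : x ∈ tailSuperlevel F t (δ + 1) :=
  fun γ hγ => absurd (hγ.trans_lt' (lt_add_one_iff.2 γ.2)) (lt_irrefl _)

noncomputable def tailIndex (F : X × Iic δ → ℝ) (t : ℝ) (x : X) : Ordinal :=
  sInf {α | x ∈ tailSuperlevel F t α}

theorem tailIndex_le (h : x ∈ tailSuperlevel F t α) : tailIndex F t x ≤ α :=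
  csInf_le' h

theorem tailIndex_le_add_one : tailIndex F t x ≤ δ + 1 :=
  tailIndex_le mem_tailSuperlevel_add_one

theorem mem_tailSuperlevel_tailIndex : x ∈ tailSuperlevel F t (tailIndex F t x) :=
  csInf_mem (s := {α | x ∈ tailSuperlevel F t α}) ⟨δ + 1, mem_tailSuperlevel_add_one⟩

theorem tailIndex_mono (h : s ≤ t) : tailIndex F s x ≤ tailIndex F t x :=
  tailIndex_le (tailSuperlevel_anti h mem_tailSuperlevel_tailIndex)

variable [TopologicalSpace X]

theorem exists_continuous_prod_Iic_of_monotone [NormalSpace (X × Iic δ)] {W : Ordinal → Set X}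
    (hWo : ∀ α, IsOpen (W α)) (hW : Monotone W) (hWcov : ∀ x, ∃ α < δ, x ∈ W α) :
    ∃ F : X × Iic δ → ℝ, Continuous F ∧ (∀ x, F (x, ⊤) = 1) ∧
      ∀ x (γ : Iic δ), (γ : Ordinal) < δ → x ∉ W γ → F (x, γ) = 0 := by
  set H := {z : X × Iic δ | (z.2 : Ordinal) < δ ∧ z.1 ∉ W z.2}
  set O := ⋃ α < δ, W α ×ˢ {γ : Iic δ | α < γ}
  have hOo : IsOpen O :=
    isOpen_biUnion fun α _ => (hWo α).prod (isOpen_lt continuous_const continuous_subtype_val)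
  have hHO : Disjoint H O := by
    refine disjoint_left.2 fun z hzH hzO => ?_
    obtain ⟨α, -, hzα, hαγ⟩ := mem_iUnion₂.1 hzO
    exact hzH.2 (hW hαγ.le hzα)
  have htop : univ ×ˢ {⊤} ⊆ O := by
    rintro ⟨x, _⟩ ⟨-, rfl⟩
    obtain ⟨α, hα, hxα⟩ := hWcov x
    exact mem_iUnion₂.2 ⟨α, hα, hxα, hα⟩
  obtain ⟨f, hf0, hf1, -⟩ := exists_continuous_zero_one_of_isClosed isClosed_closure
    (isClosed_univ.prod isClosed_singleton) ((hHO.closure_left hOo).mono_right htop)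
  exact ⟨f, f.continuous, fun x => hf1 ⟨trivial, rfl⟩,
    fun x γ hγ hx => hf0 (subset_closure ⟨hγ, hx⟩)⟩

/-- The tube lemma over the compact tail `[α, δ]`. -/
theorem isOpen_tailSuperlevel (hF : Continuous F) : IsOpen (tailSuperlevel F t α) := by
  refine isOpen_iff_forall_mem_open.2 fun x hx => ?_
  obtain ⟨N, T, hNo, -, hxN, hT, hNT⟩ := generalized_tube_lemma isCompact_singleton
    (isClosed_le continuous_const continuous_subtype_val).isCompact
    (isOpen_lt continuous_const hF) (t := {γ : Iic δ | α ≤ γ}) (n := {z | t < F z})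
    (by rintro ⟨_, γ⟩ ⟨rfl, hγ⟩; exact hx γ hγ)
  exact ⟨N, fun y hy γ hγ => hNT ⟨hy, hT hγ⟩, hNo, hxN rfl⟩

theorem le_of_mem_closure_tailSuperlevel (hF : Continuous F)
    (hx : x ∈ closure (tailSuperlevel F t α)) {γ : Iic δ} (hγ : α ≤ γ) : t ≤ F (x, γ) :=
  closure_minimal (fun _ hy => (hy γ hγ).le)
    (isClosed_le continuous_const (hF.comp (Continuous.prodMk_left γ))) hx

theorem closure_tailSuperlevel_subset (hF : Continuous F) {W : Ordinal → Set X}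
    (hF0 : ∀ x (γ : Iic δ), (γ : Ordinal) < δ → x ∉ W γ → F (x, γ) = 0) (ht : 0 < t)
    (hα : α < δ) : closure (tailSuperlevel F t α) ⊆ W α := fun x hx => by
  by_contra hxW
  have := le_of_mem_closure_tailSuperlevel hF hx (γ := ⟨α, hα.le⟩) le_rfl
  rw [hF0 x ⟨α, hα.le⟩ hα hxW] at this
  exact this.not_gt ht

theorem exists_lt_mem_tailSuperlevel (hF : Continuous F) {l : Iic δ}
    (hl : IsSuccLimit (l : Ordinal)) (hx : x ∈ tailSuperlevel F t l) :
    ∃ α < (l : Ordinal), x ∈ tailSuperlevel F t α := by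
  have hnhds : {γ : Iic δ | t < F (x, γ)} ∈ 𝓝 l :=
    (isOpen_lt continuous_const (hF.comp (Continuous.prodMk_right x))).mem_nhds (hx l le_rfl)
  obtain ⟨a, hal, ha⟩ := exists_Ioc_subset_of_mem_nhds hnhds ⟨⊥, hl.bot_lt⟩
  refine ⟨a + 1, hl.add_one_lt hal, fun γ hγ => ?_⟩
  rcases le_total γ l with hγl | hlγ
  · exact ha ⟨Subtype.mk_lt_mk.2 (add_one_le_iff.1 hγ), hγl⟩
  · exact hx γ hlγ

theorem tailIndex_eq_zero_or_exists (hF : Continuous F) :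
    tailIndex F t x = 0 ∨ ∃ m : Iic δ, tailIndex F t x = m + 1 ∧ F (x, m) ≤ t := by
  rcases Ordinal.zero_or_succ_or_isSuccLimit (tailIndex F t x) with h0 | ⟨a, ha⟩ | hlim
  · exact Or.inl h0
  · rw [succ_eq_add_one] at ha
    have haδ : a ≤ δ := lt_add_one_iff.1 ((lt_add_one a).trans_le (ha ▸ tailIndex_le_add_one))
    refine Or.inr ⟨⟨a, haδ⟩, ha.symm, ?_⟩
    have hnot : ¬ ∀ γ : Iic δ, a ≤ γ → t < F (x, γ) := fun hx =>
      (tailIndex_le hx).not_gt (ha ▸ lt_add_one a)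
    push Not at hnot
    obtain ⟨γ, haγ, hγ⟩ := hnot
    obtain rfl : γ = ⟨a, haδ⟩ := le_antisymm (not_lt.1 fun hlt =>
      (mem_tailSuperlevel_tailIndex (F := F) γ (ha ▸ add_one_le_iff.2 hlt)).not_ge hγ) haγ
    exact hγ
  · have hδ : tailIndex F t x ≤ δ := lt_add_one_iff.1 (tailIndex_le_add_one.lt_of_ne
      fun h => (hlim.add_one_lt (h ▸ lt_add_one δ)).ne h.symm)
    obtain ⟨α, hα, hxα⟩ := exists_lt_mem_tailSuperlevel hF (l := ⟨_, hδ⟩) hlim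
      mem_tailSuperlevel_tailIndex
    exact ((tailIndex_le hxα).not_gt hα).elim

def tailPiece (F : X × Iic δ → ℝ) (p q : ℝ) (α : Ordinal) : Set X :=
  {x | α < δ ∧ x ∈ tailSuperlevel F q α ∧ x ∉ closure (⋃ β < α, tailSuperlevel F p β)}

theorem isOpen_tailPiece (hF : Continuous F) : IsOpen (tailPiece F p q α) := by
  by_cases hα : α < δ
  · convert (isOpen_tailSuperlevel hF (t := q) (α := α)).sdiff
      (isClosed_closure (s := ⋃ β < α, tailSuperlevel F p β)) using 1
    ext x; simp [tailPiece, hα]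
  · convert isOpen_empty; ext x; simp [tailPiece, hα]

theorem tailPiece_subset (hF : Continuous F) {W : Ordinal → Set X}
    (hF0 : ∀ x (γ : Iic δ), (γ : Ordinal) < δ → x ∉ W γ → F (x, γ) = 0) (hq : 0 < q) :
    tailPiece F p q α ⊆ W α :=
  fun _ hx => closure_tailSuperlevel_subset hF hF0 hq hx.1 (subset_closure hx.2.1)

theorem tailPiece_eq_empty (hα : δ ≤ α) : tailPiece F p q α = ∅ :=
  eq_empty_of_forall_notMem fun _ hx => hx.1.not_ge hα

theorem disjoint_tailPiece_tailSuperlevel (h : β < α) :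
    Disjoint (tailPiece F p q α) (tailSuperlevel F p β) :=
  disjoint_left.2 fun _ hx hxβ => hx.2.2 (subset_closure (mem_biUnion h hxβ))

theorem locallyFinite_tailPiece (hF : Continuous F) (hpq : p < q) :
    LocallyFinite (tailPiece F p q) := by
  intro x
  obtain ⟨B, hB, hBα⟩ : ∃ B ∈ 𝓝 x, ∀ α < tailIndex F p x, Disjoint (tailPiece F p q α) B := by
    rcases tailIndex_eq_zero_or_exists hF (t := p) (x := x) with h0 | ⟨m, hm, hFm⟩
    · exact ⟨univ, univ_mem, fun α hα => (not_lt_zero (h0 ▸ hα)).elim⟩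
    · refine ⟨{y | F (y, m) < q},
        (isOpen_lt (hF.comp (Continuous.prodMk_left m)) continuous_const).mem_nhds
          (hFm.trans_lt hpq), fun α hα => ?_⟩
      rw [hm, lt_add_one_iff] at hα
      exact disjoint_left.2 fun y hy hy' => (hy.2.1 m hα).not_gt hy'
  refine ⟨tailSuperlevel F p (tailIndex F p x) ∩ B, inter_mem
    ((isOpen_tailSuperlevel hF).mem_nhds mem_tailSuperlevel_tailIndex) hB,
    (finite_singleton (tailIndex F p x)).subset ?_⟩
  rintro α ⟨y, hyα, hya, hyB⟩
  rcases lt_trichotomy α (tailIndex F p x) with h | h | h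
  · exact absurd hyB (disjoint_left.1 (hBα α h) hyα)
  · exact h
  · exact absurd hya (disjoint_left.1 (disjoint_tailPiece_tailSuperlevel h) hyα)

theorem exists_eq_of_forall_notMem_tailPiece (hF : Continuous F) (hδ : IsSuccLimit δ)
    (hx : F (x, ⊤) = 1) {q : ℚ} (hq : (q : ℝ) < 1)
    (hnot : ∀ p : ℚ, p < q → ∀ α, x ∉ tailPiece F p q α) :
    ∃ m : Iic δ, tailIndex F q x = m + 1 ∧ F (x, m) = q := by
  have hlt : tailIndex F q x < δ := by
    obtain ⟨α, hα, hxα⟩ := exists_lt_mem_tailSuperlevel hF (l := ⊤) hδ fun γ hγ => by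
      obtain rfl : γ = ⊤ := Subtype.ext (le_antisymm γ.2 hγ)
      rwa [hx]
    exact (tailIndex_le hxα).trans_lt hα
  have hcl : ∀ p : ℚ, p < q → x ∈ closure (⋃ β < tailIndex F q x, tailSuperlevel F p β) :=
    fun p hpq => not_not.1 fun h => hnot p hpq _ ⟨hlt, mem_tailSuperlevel_tailIndex, h⟩
  rcases tailIndex_eq_zero_or_exists hF (t := q) (x := x) with h0 | ⟨m, hm, hFm⟩
  · simpa [h0] using hcl (q - 1) (sub_one_lt q)
  · refine ⟨m, hm, le_antisymm hFm (le_of_forall_rat_lt_imp_le fun p hpq => ?_)⟩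
    refine le_of_mem_closure_tailSuperlevel hF (closure_mono (iUnion₂_subset fun β hβ =>
      tailSuperlevel_mono (lt_add_one_iff.1 (hm ▸ hβ))) (hcl p (by exact_mod_cast hpq))) le_rfl

theorem exists_mem_tailPiece (hF : Continuous F) (hδ : IsSuccLimit δ) (hx : F (x, ⊤) = 1) :
    ∃ p q : ℚ, p < q ∧ 0 < q ∧ q < 1 ∧ ∃ α, x ∈ tailPiece F p q α := by
  by_contra! h
  have key (q : ℚ) (hq : q ∈ Ioo 0 1) : ∃ m : Iic δ, tailIndex F q x = m + 1 ∧ F (x, m) = q :=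
    exists_eq_of_forall_notMem_tailPiece hF hδ hx (by exact_mod_cast hq.2)
      fun p hpq => h p q hpq hq.1 hq.2
  -- The value `q` is attained by `F (x, ·)` just below `tailIndex F q x`, so these indices
  -- increase strictly with `q`.
  refine not_strictMonoOn_rat_Ioo (fun q : ℚ => tailIndex F q x) fun p hp q hq hpq => ?_
  obtain ⟨m, hm, hFm⟩ := key p hp
  obtain ⟨n, hn, hFn⟩ := key q hq
  refine (tailIndex_mono (by exact_mod_cast hpq.le)).lt_of_ne fun heq => hpq.ne ?_
  obtain rfl : m = n := Subtype.ext (by simpa [hm, hn] using heq)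
  exact_mod_cast hFm.symm.trans hFn

end Tail

section Refinement

variable {X : Type*} [TopologicalSpace X]

theorem exists_sigma_locallyFinite_refinement {δ : Ordinal} [NormalSpace (X × Iic δ)]
    (hδ : IsSuccLimit δ) {W : Ordinal → Set X} (hWo : ∀ α, IsOpen (W α)) (hW : Monotone W)
    (hWcov : ∀ x, ∃ α < δ, x ∈ W α) :
    ∃ V : ℕ → Ordinal → Set X, (∀ n α, IsOpen (V n α)) ∧ (∀ n α, V n α ⊆ W α) ∧
      (∀ n α, δ ≤ α → V n α = ∅) ∧ (∀ n, LocallyFinite (V n)) ∧ ⋃ n, ⋃ α, V n α = univ := by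
  obtain ⟨F, hF, hF1, hF0⟩ := exists_continuous_prod_Iic_of_monotone hWo hW hWcov
  let P := {r : ℚ × ℚ // r.1 < r.2 ∧ 0 < r.2 ∧ r.2 < 1}
  have : Nonempty P := ⟨⟨(0, 1 / 2), by norm_num⟩⟩
  obtain ⟨e, he⟩ := exists_surjective_nat P
  refine ⟨fun n => tailPiece F (e n).1.1 (e n).1.2, fun n α => isOpen_tailPiece hF,
    fun n α => tailPiece_subset hF hF0 (by exact_mod_cast (e n).2.2.1),
    fun n α => tailPiece_eq_empty,
    fun n => locallyFinite_tailPiece hF (by exact_mod_cast (e n).2.1), ?_⟩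
  refine eq_univ_of_forall fun x => ?_
  obtain ⟨p, q, hpq, hq0, hq1, α, hx⟩ := exists_mem_tailPiece hF hδ (hF1 x)
  obtain ⟨n, hn⟩ := he ⟨(p, q), hpq, hq0, hq1⟩
  exact mem_iUnion₂.2 ⟨n, α, by rwa [hn]⟩

theorem exists_isClosed_subset_of_monotone [NormalSpace (X × Iic Ordinal.omega0)]
    {H : ℕ → Set X} (hHo : ∀ n, IsOpen (H n)) (hH : Monotone H) (hHcov : ⋃ n, H n = univ) :
    ∃ C : ℕ → Set X, (∀ n, IsClosed (C n)) ∧ (∀ n, C n ⊆ H n) ∧ ∀ x, ∃ n, C n ∈ 𝓝 x := by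
  let W : Ordinal → Set X := fun β => ⋃ (n : ℕ) (_ : (n : Ordinal) ≤ β), H n
  have hWH (n : ℕ) : W n = H n :=
    subset_antisymm (iUnion₂_subset fun m hm => hH (by exact_mod_cast hm))
      (subset_iUnion₂_of_subset n le_rfl subset_rfl)
  obtain ⟨F, hF, hF1, hF0⟩ := exists_continuous_prod_Iic_of_monotone (δ := Ordinal.omega0) (W := W)
    (fun β => isOpen_biUnion fun n _ => hHo n)
    (fun β β' h => biUnion_mono (fun (n : ℕ) (hn : (n : Ordinal) ≤ β) => hn.trans h)
      fun _ _ => subset_rfl)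
    fun x => by
      obtain ⟨n, hn⟩ := mem_iUnion.1 (hHcov.symm ▸ mem_univ x)
      exact ⟨n, Ordinal.natCast_lt_omega0 n, (hWH n).symm ▸ hn⟩
  refine ⟨fun n => closure (tailSuperlevel F (1 / 2) n), fun n => isClosed_closure,
    fun n => hWH n ▸ closure_tailSuperlevel_subset hF hF0 one_half_pos
      (Ordinal.natCast_lt_omega0 n), fun x => ?_⟩
  obtain ⟨α, hα, hxα⟩ := exists_lt_mem_tailSuperlevel hF (l := ⊤) (t := 1 / 2)
    Ordinal.isSuccLimit_omega0 fun γ hγ => by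
      obtain rfl : γ = ⊤ := Subtype.ext (le_antisymm γ.2 hγ)
      rw [hF1]; norm_num
  obtain ⟨n, rfl⟩ := Ordinal.lt_omega0.1 hα
  exact ⟨n, mem_of_superset ((isOpen_tailSuperlevel hF).mem_nhds hxα) subset_closure⟩

theorem exists_locallyFinite_refinement_of_sigma [NormalSpace (X × Iic Ordinal.omega0)]
    {ι : Type*} {V : ℕ → ι → Set X} (hVo : ∀ n i, IsOpen (V n i))
    (hVlf : ∀ n, LocallyFinite (V n)) (hVcov : ⋃ n, ⋃ i, V n i = univ) :
    ∃ V' : ℕ × ι → Set X, (∀ p, IsOpen (V' p)) ∧ (∀ p, V' p ⊆ V p.1 p.2) ∧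
      ⋃ p, V' p = univ ∧ LocallyFinite V' := by
  classical
  let H : ℕ → Set X := fun n => ⋃ m ≤ n, ⋃ i, V m i
  obtain ⟨C, hCc, hCH, hCnhds⟩ := exists_isClosed_subset_of_monotone (H := H)
    (fun n => isOpen_biUnion fun m _ => isOpen_iUnion (hVo m))
    (fun m n h => biUnion_subset_biUnion_left fun k hk => le_trans hk h)
    (eq_univ_of_forall fun x => by
      obtain ⟨n, hn⟩ := mem_iUnion.1 (hVcov.symm ▸ mem_univ x)
      exact mem_iUnion.2 ⟨n, mem_iUnion₂.2 ⟨n, le_rfl, hn⟩⟩)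
  -- `G n` removes what the earlier levels already cover, so near a point of `C n` only the
  -- levels `≤ n` survive.
  let G : ℕ → Set X := fun n => (⋃ m < n, C m)ᶜ
  have hG : LocallyFinite G := fun x => by
    obtain ⟨n, hn⟩ := hCnhds x
    refine ⟨C n, hn, (finite_Iic n).subset fun m ⟨y, hyG, hyC⟩ => mem_Iic.2 (not_lt.1 fun h => ?_)⟩
    exact hyG (mem_iUnion₂.2 ⟨n, h, hyC⟩)
  refine ⟨fun p => G p.1 ∩ V p.1 p.2, fun p => (isOpen_compl_iff.2
    ((finite_Iio p.1).isClosed_biUnion fun m _ => hCc m)).inter (hVo _ _),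
    fun p => inter_subset_right, eq_univ_of_forall fun x => ?_, ?_⟩
  · have hx : ∃ n, x ∈ ⋃ i, V n i := mem_iUnion.1 (hVcov.symm ▸ mem_univ x)
    obtain ⟨i, hi⟩ := mem_iUnion.1 (Nat.find_spec hx)
    refine mem_iUnion.2 ⟨(Nat.find hx, i), fun hxC => ?_, hi⟩
    obtain ⟨m, hm, hxm⟩ := mem_iUnion₂.1 hxC
    obtain ⟨k, hk, hxk⟩ := mem_iUnion₂.1 (hCH m hxm)
    exact Nat.find_min hx (hk.trans_lt hm) hxk
  · exact (hG.sigma_inter hVlf).comp_injective (g := (Equiv.sigmaEquivProd ℕ ι).symm)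
      (Equiv.injective _)

theorem exists_locallyFinite_refinement_of_monotone {δ : Ordinal} [NormalSpace (X × Iic δ)]
    (hδ : IsSuccLimit δ) {W : Ordinal → Set X} (hWo : ∀ α, IsOpen (W α)) (hW : Monotone W)
    (hWcov : ∀ x, ∃ α < δ, x ∈ W α) :
    ∃ V : ℕ × Ordinal → Set X, (∀ i, IsOpen (V i)) ∧ (∀ i, V i ⊆ W i.2) ∧
      (∀ i, δ ≤ i.2 → V i = ∅) ∧ ⋃ i, V i = univ ∧ LocallyFinite V := by
  obtain ⟨V, hVo, hVW, hVδ, hVlf, hVcov⟩ :=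
    exists_sigma_locallyFinite_refinement hδ hWo hW hWcov
  have := normalSpace_prod_Iic_of_le (X := X) (Ordinal.omega0_le_of_isSuccLimit hδ)
  obtain ⟨V', hV'o, hV'V, hV'cov, hV'lf⟩ := exists_locallyFinite_refinement_of_sigma hVo hVlf hVcov
  exact ⟨V', hV'o, fun i => (hV'V i).trans (hVW _ _),
    fun i hi => subset_empty_iff.1 (hVδ _ _ hi ▸ hV'V i), hV'cov, hV'lf⟩

end Refinement

theorem HasLocallyFiniteOpenRefinement.of_locallyFinite_cover {X : Type u} [TopologicalSpace X]
    [NormalSpace X] {𝒰 : Set (Set X)} (h𝒰o : ∀ U ∈ 𝒰, IsOpen U) {ι : Type*} {V : ι → Set X}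
    (hVo : ∀ i, IsOpen (V i)) (hVcov : ⋃ i, V i = univ) (hVlf : LocallyFinite V)
    (hloc : ∀ i, ∃ 𝒰' ⊆ 𝒰, V i ⊆ ⋃₀ 𝒰' ∧ TauParacompact X (#𝒰' + 1)) :
    HasLocallyFiniteOpenRefinement 𝒰 := by
  choose 𝒰' h𝒰'𝒰 hV𝒰' hpara using hloc
  obtain ⟨v, hvcov, hvo, hvV⟩ := exists_subset_iUnion_closure_subset isClosed_univ hVo
    (fun x _ => hVlf.point_finite x) hVcov.ge
  -- `(closure (v i))ᶜ` covers everything away from `v i`, so near `v i` only `𝒰' i` is used.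
  have hrefine (i) : HasLocallyFiniteOpenRefinement (insert (closure (v i))ᶜ (𝒰' i)) := by
    refine hpara i _ ?_ (eq_univ_of_forall fun x => ?_) Cardinal.mk_insert_le
    · rintro U (rfl | hU)
      exacts [isClosed_closure.isOpen_compl, h𝒰o U (h𝒰'𝒰 i hU)]
    · by_cases hx : x ∈ closure (v i)
      · obtain ⟨U, hU, hxU⟩ := hV𝒰' i (hvV i hx)
        exact ⟨U, mem_insert_of_mem _ hU, hxU⟩
      · exact ⟨_, mem_insert _ _, hx⟩
  choose 𝒟 h𝒟o h𝒟cov h𝒟sub h𝒟lf using hrefine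
  refine .of_locallyFinite (V := fun p : Σ i, 𝒟 i => v p.1 ∩ p.2)
    (fun p => (hvo _).inter (h𝒟o _ _ p.2.2)) (eq_univ_of_forall fun x => ?_) ?_
    ((hVlf.subset fun i => subset_closure.trans (hvV i)).sigma_inter
      fun i => locallyFinite_subtype_val (h𝒟lf i))
  · obtain ⟨i, hi⟩ := mem_iUnion.1 (hvcov (mem_univ x))
    obtain ⟨D, hD, hxD⟩ := (h𝒟cov i).symm ▸ mem_univ x
    exact mem_iUnion.2 ⟨⟨i, D, hD⟩, hi, hxD⟩
  · rintro ⟨i, D, hD⟩ ⟨y, hyv, hyD⟩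
    obtain ⟨C, hC, hDC⟩ := h𝒟sub i D hD
    rcases mem_insert_iff.1 hC with rfl | hC
    · exact absurd (subset_closure hyv) (hDC hyD)
    · exact ⟨C, h𝒰'𝒰 i hC, inter_subset_right.trans hDC⟩

theorem Cardinal.exists_injOn_lt_ord {α : Type u} {s : Set α} {κ : Cardinal.{u}}
    (h : #s ≤ κ) : ∃ r : α → Ordinal.{u}, InjOn r s ∧ ∀ a ∈ s, r a < κ.ord := by
  classical
  obtain ⟨j⟩ : Nonempty (s ↪ Iio κ.ord) := by
    rw [← Cardinal.lift_mk_le', Cardinal.mk_Iio_ordinal, Cardinal.card_ord, Cardinal.lift_lift]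
    exact Cardinal.lift_le.2 h
  refine ⟨fun a => if ha : a ∈ s then j ⟨a, ha⟩ else 0, fun a ha b hb hab => ?_, fun a ha => ?_⟩
  · simp only [dif_pos ha, dif_pos hb] at hab
    exact congrArg Subtype.val (j.injective (Subtype.ext hab))
  · simp only [dif_pos ha]
    exact (j ⟨a, ha⟩).2

theorem Cardinal.mk_sep_le_card_add_one {α : Type u} {s : Set α} {r : α → Ordinal.{u}}
    (hr : InjOn r s) (o : Ordinal.{u}) : #{a ∈ s | r a ≤ o} ≤ (o + 1).card := by
  have hf : Function.Injective fun a : {a ∈ s | r a ≤ o} =>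
      (⟨r a, lt_add_one_iff.2 a.2.2⟩ : Iio (o + 1)) :=
    fun a b hab => Subtype.ext (hr a.2.1 b.2.1 (congrArg Subtype.val hab))
  have := Cardinal.lift_mk_le_lift_mk_of_injective hf
  rwa [Cardinal.mk_Iio_ordinal, Cardinal.lift_lift, Cardinal.lift_le] at this

theorem tauParacompact_of_lt_aleph0 {X : Type u} [TopologicalSpace X] {τ : Cardinal.{u}}
    (hτ : τ < ℵ₀) : TauParacompact X τ := fun 𝒰 h𝒰o h𝒰cov h𝒰card =>
  have h𝒰 : 𝒰.Finite := Cardinal.lt_aleph0_iff_set_finite.1 (h𝒰card.trans_lt hτ)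
  ⟨𝒰, h𝒰o, h𝒰cov, fun U hU => ⟨U, hU, subset_rfl⟩,
    fun _ => ⟨univ, univ_mem, h𝒰.subset (sep_subset _ _)⟩⟩

theorem tauParacompact_of_forall_lt {X : Type u} [TopologicalSpace X] {κ : Cardinal.{u}}
    (hκ : ℵ₀ ≤ κ) [NormalSpace (X × Iic κ.ord)]
    (ih : ∀ μ < κ, TauParacompact X μ) : TauParacompact X κ := by
  intro 𝒰 h𝒰o h𝒰cov h𝒰card
  have : NormalSpace X := normalSpace_of_normalSpace_prod (⊤ : Iic κ.ord)
  have hδ := Cardinal.isSuccLimit_ord hκ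
  obtain ⟨r, hr, hrκ⟩ := Cardinal.exists_injOn_lt_ord h𝒰card
  obtain ⟨V, hVo, hVW, hVδ, hVcov, hVlf⟩ := exists_locallyFinite_refinement_of_monotone hδ
    (W := fun α => ⋃₀ {U ∈ 𝒰 | r U ≤ α}) (fun α => isOpen_sUnion fun U hU => h𝒰o U hU.1)
    (fun α β h => sUnion_mono fun U hU => ⟨hU.1, hU.2.trans h⟩) fun x => by
      obtain ⟨U, hU, hxU⟩ := h𝒰cov.symm ▸ mem_univ x
      exact ⟨r U, hrκ U hU, U, ⟨hU, le_rfl⟩, hxU⟩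
  refine HasLocallyFiniteOpenRefinement.of_locallyFinite_cover h𝒰o hVo hVcov hVlf fun i => ?_
  by_cases hi : i.2 < κ.ord
  · refine ⟨{U ∈ 𝒰 | r U ≤ i.2}, sep_subset _ _, hVW i, ih _ ?_⟩
    calc #{U ∈ 𝒰 | r U ≤ i.2} + 1 ≤ (i.2 + 1).card + 1 := by
          gcongr; exact Cardinal.mk_sep_le_card_add_one hr _
      _ = (i.2 + 1 + 1).card := (Ordinal.card_add_one _).symm
      _ < κ := Cardinal.lt_ord.1 (hδ.add_one_lt (hδ.add_one_lt hi))
  · refine ⟨∅, empty_subset _, by simp [hVδ i (not_lt.1 hi)], ih _ ?_⟩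
    simpa using Cardinal.one_lt_aleph0.trans_le hκ

theorem stmt_17_general {X : Type u} [TopologicalSpace X]
    (τ : Cardinal.{u})
    (hnorm : NormalSpace (X × (Set.Iic τ.ord : Set Ordinal.{u}))) :
    TauParacompact X τ := by
  induction τ using WellFoundedLT.induction with
  | ind κ ih =>
    rcases lt_or_ge κ ℵ₀ with hκ | hκ
    · exact tauParacompact_of_lt_aleph0 hκ
    · exact tauParacompact_of_forall_lt hκ fun μ hμ =>
        ih μ hμ (normalSpace_prod_Iic_of_le (Cardinal.ord_le_ord.2 hμ.le))

/-- If `X × (τ+1)` is normal, where `τ+1` is the ordinal space of all ordinals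
`≤ τ` (for an infinite cardinal `τ`, identified with its initial ordinal), then
`X` is `τ`-paracompact. -/
theorem stmt_17 {X : Type u} [TopologicalSpace X] [T2Space X]
    (τ : Cardinal.{u}) (hτ : Cardinal.aleph0 ≤ τ)
    (hnorm : NormalSpace (X × (Set.Iic τ.ord : Set Ordinal.{u}))) :
    TauParacompact X τ :=
  stmt_17_general τ hnorm
end
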